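/- arXiv:1703.02290 — 7 statements merged into one kernel-verified Lean document; each statement's English description precedes it below -/
import Mathlib

section
/- Let Γ = Cay(G,S) be a Cayley digraph with Cayley index i (that is, the right regular representation of G has index i in A = Aut(Γ)). If A contains a regular subgroup H distinct from (the right regular representation of) G, then G has a proper subgroup of index at most i. -/
/-- The automorphism group of a digraph given by an adjacency relation. -/
def dAut {V : Type*} (adj : V → V → Prop) : Subgroup (Equiv.Perm V) where
  carrier := {σ | ∀ u v : V, adj (σ u) (σ v) ↔ adj u v}
  one_mem' := by intro u v; rfl
  mul_mem' := by
    intro a b ha hb u v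
    simp only [Set.mem_setOf_eq] at *
    rw [Equiv.Perm.mul_apply, Equiv.Perm.mul_apply, ha, hb]
  inv_mem' := by
    intro a ha u v
    simpa using (ha (a⁻¹ u) (a⁻¹ v)).symm

/-- Adjacency of the Cayley digraph `Cay(G,S)`. -/
def cayAdj (G : Type*) [Group G] (S : Set G) : G → G → Prop :=
  fun u v => v * u⁻¹ ∈ S

/-- The right regular representation of `G` in `Equiv.Perm G`. -/
def rightReg (G : Type*) [Group G] : G →* Equiv.Perm G where
  toFun g := Equiv.mulRight g⁻¹
  map_one' := by ext x; simp
  map_mul' := by intro a b; ext x; simp [mul_assoc]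

/-- The right regular representation of `G` as a subgroup of `Aut(Cay(G,S))`. -/
def cayleyRR (G : Type*) [Group G] (S : Set G) :
    Subgroup (dAut (cayAdj G S)) :=
  ((rightReg G).range).subgroupOf (dAut (cayAdj G S))

/-- A subgroup of `Equiv.Perm V` is regular if it is sharply transitive on `V`. -/
def IsRegularSub {V : Type*} (H : Subgroup (Equiv.Perm V)) : Prop :=
  ∀ v w : V, ∃! h : H, (h : Equiv.Perm V) v = w

/-- Adjacency of the cartesian product of two digraphs. -/
def cartAdj {α β : Type*} (adjG : α → α → Prop) (adjD : β → β → Prop) :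
    α × β → α × β → Prop :=
  fun u v => (u.1 = v.1 ∧ adjD u.2 v.2) ∨ (u.2 = v.2 ∧ adjG u.1 v.1)

/-- `pathLe adj i u v` : there is a directed path of length at most `i` from `u` to `v`. -/
def pathLe {V : Type*} (adj : V → V → Prop) : ℕ → V → V → Prop
  | 0, u, v => u = v
  | (n+1), u, v => pathLe adj n u v ∨ ∃ w, pathLe adj n u w ∧ adj w v

/-! The subgroup `K = G ∩ H`, pulled back to `G`, does the job. Since `|H| = |G|`, the
index of `G ∩ H` in `G` is at most `|A : H| = |A : G|`, the Cayley index; and `K = G` would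
give `G ≤ H`, hence `G = H` as both have the same order. -/

namespace Subgroup

variable {P : Type*} [Group P] {H R A : Subgroup P}

theorem relIndex_eq_of_card_eq [Finite A] (hH : H ≤ A) (hR : R ≤ A)
    (hcard : Nat.card H = Nat.card R) : H.relIndex A = R.relIndex A := by
  have : Finite H := Finite.of_injective _ (inclusion_injective hH)
  have hH_mul := relIndex_mul_relIndex _ _ _ bot_le hH
  have hR_mul := relIndex_mul_relIndex _ _ _ bot_le hR
  rw [relIndex_bot_left, hcard] at hH_mul
  rw [relIndex_bot_left] at hR_mul
  exact Nat.eq_of_mul_eq_mul_left (hcard ▸ Nat.card_pos) (hH_mul.trans hR_mul.symm)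

theorem relIndex_le_relIndex_of_card_eq [Finite A] (hH : H ≤ A) (hR : R ≤ A)
    (hcard : Nat.card H = Nat.card R) : H.relIndex R ≤ R.relIndex A :=
  (relIndex_le_of_le_right hR index_ne_zero_of_finite).trans_eq
    (relIndex_eq_of_card_eq hH hR hcard)

end Subgroup

theorem IsRegularSub.card_eq {V : Type*} [Nonempty V] {H : Subgroup (Equiv.Perm V)}
    (hreg : IsRegularSub H) : Nat.card H = Nat.card V := by
  obtain ⟨v⟩ := ‹Nonempty V›
  refine Nat.card_congr (Equiv.ofBijective (fun h : H => (h : Equiv.Perm V) v) ⟨?_, ?_⟩)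
  · intro a b hab
    obtain ⟨_, -, huniq⟩ := hreg v ((a : Equiv.Perm V) v)
    exact (huniq a rfl).trans (huniq b hab.symm).symm
  · intro w
    obtain ⟨h, hv, -⟩ := hreg v w
    exact ⟨h, hv⟩

theorem rightReg_injective (G : Type*) [Group G] : Function.Injective (rightReg G) := by
  intro a b h
  simpa [rightReg] using congrArg (fun σ : Equiv.Perm G => σ 1) h

theorem card_range_rightReg (G : Type*) [Group G] :
    Nat.card (rightReg G).range = Nat.card G :=
  (Nat.card_congr (MonoidHom.ofInjective (rightReg_injective G)).toEquiv).symm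

theorem range_rightReg_le_dAut (G : Type*) [Group G] (S : Set G) :
    (rightReg G).range ≤ dAut (cayAdj G S) := by
  rintro σ ⟨g, rfl⟩ u v
  simp [rightReg, cayAdj, mul_assoc]

theorem stmt_1_general {G : Type*} [Group G] [Fintype G] (S : Set G)
    (H : Subgroup (Equiv.Perm G)) (hHA : H ≤ dAut (cayAdj G S))
    (hreg : IsRegularSub H) (hne : H ≠ (rightReg G).range) :
    ∃ K : Subgroup G, K ≠ ⊤ ∧ K.index ≤ (cayleyRR G S).index := by
  have hcard : Nat.card H = Nat.card (rightReg G).range :=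
    hreg.card_eq.trans (card_range_rightReg G).symm
  refine ⟨H.comap (rightReg G), fun htop => hne ?_, ?_⟩
  · have hRH : (rightReg G).range ≤ H := by
      rintro _ ⟨g, rfl⟩
      exact htop.ge (Subgroup.mem_top g)
    exact (Subgroup.eq_of_le_of_card_ge hRH hcard.le).symm
  · rw [Subgroup.index_comap]
    exact Subgroup.relIndex_le_relIndex_of_card_eq hHA (range_rightReg_le_dAut G S) hcard

/-- If the automorphism group of a Cayley digraph on `G` contains a regular subgroup
distinct from the right regular representation of `G`, then `G` has a proper subgroup
of index at most the Cayley index. -/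
theorem stmt_1 {G : Type*} [Group G] [Fintype G] (S : Set G) (hS1 : (1 : G) ∉ S)
    (H : Subgroup (Equiv.Perm G)) (hHA : H ≤ dAut (cayAdj G S))
    (hreg : IsRegularSub H) (hne : H ≠ (rightReg G).range) :
    ∃ K : Subgroup G, K ≠ ⊤ ∧ K.index ≤ (cayleyRR G S).index :=
  stmt_1_general S H hHA hreg hne
end

section
/- Let Γ be a connected digraph, v a vertex of Γ, and A a transitive group of automorphisms of Γ. For a vertex u and i ≥ 1, let A_u^{+[i]} denote the subgroup of the stabilizer A_u fixing every vertex reachable from u by a directed path of length at most i. If A_v^{+[1]} = A_v^{+[2]}, then A_v^{+[1]} = 1. -/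
section AuxStmt2

variable {V : Type*} (adj : V → V → Prop)

lemma aut_pathLe {σ : Equiv.Perm V} (hσ : σ ∈ dAut adj) :
    ∀ n (u w : V), pathLe adj n u w → pathLe adj n (σ u) (σ w) := by
  intro n
  induction n with
  | zero => intro u w h; exact congrArg σ h
  | succ n ih =>
    rintro u w (h | ⟨x, hx, hadj⟩)
    · exact Or.inl (ih u w h)
    · exact Or.inr ⟨σ x, ih u x hx, (hσ x w).mpr hadj⟩

lemma aut_reach {σ : Equiv.Perm V} (hσ : σ ∈ dAut adj) {u w : V}
    (h : Relation.ReflTransGen adj u w) :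
    Relation.ReflTransGen adj (σ u) (σ w) := by
  induction h with
  | refl => exact .refl
  | tail _ hadj ih => exact ih.tail ((hσ _ _).mpr hadj)

lemma aut_reachSet {σ : Equiv.Perm V} (hσ : σ ∈ dAut adj) (u : V) :
    {w | Relation.ReflTransGen adj (σ u) w} = σ '' {w | Relation.ReflTransGen adj u w} := by
  ext w
  constructor
  · intro hw
    refine ⟨σ⁻¹ w, ?_, by simp⟩
    have := aut_reach adj ((dAut adj).inv_mem hσ) hw
    simpa using this
  · rintro ⟨x, hx, rfl⟩
    exact aut_reach adj hσ hx

lemma reach_symm [Fintype V] (A : Subgroup (Equiv.Perm V)) (hA : A ≤ dAut adj)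
    (htrans : ∀ u w : V, ∃ σ ∈ A, σ u = w) {u w : V}
    (h : Relation.ReflTransGen adj u w) : Relation.ReflTransGen adj w u := by
  set R : V → Set V := fun x => {y | Relation.ReflTransGen adj x y} with hR
  have hcard : ∀ x y : V, (R x).ncard = (R y).ncard := by
    intro x y
    obtain ⟨σ, hσA, rfl⟩ := htrans x y
    have : R (σ x) = σ '' R x := aut_reachSet adj (hA hσA) x
    rw [this, Set.ncard_image_of_injective _ σ.injective]
  have hsub : R w ⊆ R u := fun y hy => h.trans hy
  have heq : R w = R u := by
    refine Set.eq_of_subset_of_ncard_le hsub ?_ (Set.toFinite _)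
    exact (hcard u w).le
  have : u ∈ R u := Relation.ReflTransGen.refl
  rw [← heq] at this
  exact this

end AuxStmt2

/-- If, in a connected digraph with a transitive group `A` of automorphisms, the
pointwise stabiliser of the out-ball of radius 1 at `v` equals that of the out-ball
of radius 2, then the former is trivial. -/
theorem stmt_2 {V : Type*} [Fintype V] (adj : V → V → Prop)
    (hloop : ∀ v : V, ¬ adj v v)
    (hconn : ∀ u w : V, Relation.ReflTransGen (fun a b => adj a b ∨ adj b a) u w)
    (A : Subgroup (Equiv.Perm V)) (hA : A ≤ dAut adj)
    (htrans : ∀ u w : V, ∃ σ ∈ A, σ u = w) (v : V)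
    (h12 : ∀ σ ∈ A, (∀ u, pathLe adj 1 v u → σ u = u) →
      ∀ u, pathLe adj 2 v u → σ u = u) :
    ∀ σ ∈ A, (∀ u, pathLe adj 1 v u → σ u = u) → σ = 1 := by
  intro σ hσA hfix
  have hσaut := hA hσA
  -- Step 1: for ANY vertex u (by transitivity + conjugation), fixing the out-ball of
  -- radius 1 at u implies fixing the out-ball of radius 2 at u.
  have step2 : ∀ u : V, (∀ x, pathLe adj 1 u x → σ x = x) →
      ∀ x, pathLe adj 2 u x → σ x = x := by
    intro u hfixu x hx
    obtain ⟨τ, hτA, hτv⟩ := htrans v u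
    have hτaut := hA hτA
    have hconj : (τ⁻¹ * σ * τ) ∈ A := A.mul_mem (A.mul_mem (A.inv_mem hτA) hσA) hτA
    have hfix1 : ∀ y, pathLe adj 1 v y → (τ⁻¹ * σ * τ) y = y := by
      intro y hy
      have h1 : pathLe adj 1 u (τ y) := by
        have := aut_pathLe adj hτaut 1 v y hy
        rwa [hτv] at this
      have hfy : σ (τ y) = τ y := hfixu _ h1
      simp [Equiv.Perm.mul_apply, hfy]
    have hpath : pathLe adj 2 v (τ⁻¹ x) := by
      have := aut_pathLe adj ((dAut adj).inv_mem hτaut) 2 u x hx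
      have huv : τ⁻¹ u = v := by rw [← hτv]; simp
      rwa [huv] at this
    have := h12 _ hconj hfix1 (τ⁻¹ x) hpath
    simp only [Equiv.Perm.mul_apply] at this
    have := congrArg τ this
    simpa using this
  -- Step 2: fixing the 1-ball propagates along directed edges.
  have prop : ∀ u : V, (∀ x, pathLe adj 1 u x → σ x = x) →
      ∀ w, adj u w → ∀ x, pathLe adj 1 w x → σ x = x := by
    intro u hu w huw x hx
    apply step2 u hu
    rcases hx with hx | ⟨y, hy, hadj⟩
    · have hwx : w = x := hx
      subst hwx
      exact Or.inr ⟨u, Or.inl rfl, huw⟩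
    · have hwy : w = y := hy
      subst hwy
      exact Or.inr ⟨w, Or.inr ⟨u, rfl, huw⟩, hadj⟩
  -- Step 3: σ fixes the 1-ball at every vertex reachable from v by a directed path.
  have reachfix : ∀ w, Relation.ReflTransGen adj v w →
      ∀ x, pathLe adj 1 w x → σ x = x := by
    intro w hw
    induction hw with
    | refl => exact hfix
    | tail _ hadj ih => exact prop _ ih _ hadj
  -- Step 4: every vertex is reachable from v by a directed path (strong connectivity).
  have reachall : ∀ w, Relation.ReflTransGen adj v w := by
    intro w
    have h := hconn v w
    induction h with
    | refl => exact .refl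
    | tail hab hadj ih =>
      rcases hadj with h1 | h1
      · exact ih.tail h1
      · exact ih.trans (reach_symm adj A hA htrans (Relation.ReflTransGen.single h1))
  ext x
  have := reachfix x (reachall x) x (Or.inl rfl)
  simpa using this
end

section
/- Let p be a prime and let A be a finite permutation group of p-power order with a regular abelian subgroup G of index p. If G has a subgroup M of index p that is normalised but not centralised by a point-stabiliser in A, then A contains a regular nonabelian subgroup. -/
/-!
Pick `σ ∈ A_v` not centralising `M` and `g ∈ G \ M`. Since `A = G A_v` and both `G` (abelian)
and `A_v` normalise `M`, the subgroup `M` is normal in `A`, and `A / M` has order `p²`, hence is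
abelian. Consequently `G ⊴ A`, so `σ^p ∈ G ∩ A_v = 1`, and `(σ g)^k ≡ σ^k g^k` modulo `M`. The
preimage `H = M⟨σ g⟩` of `⟨σ g⟩ ≤ A / M` therefore has index `p` in `A`, i.e. `|H| = |G| = |X|`,
and meets `A_v` trivially: `H` is regular. It is nonabelian because `g` centralises `M` while
`σ g` does not.
-/

open Subgroup

namespace IsRegularSub

variable {X : Type*} {H : Subgroup (Equiv.Perm X)}

theorem exists_mem_apply_eq (hH : IsRegularSub H) (v w : X) : ∃ x ∈ H, x v = w :=
  let ⟨x, hx, _⟩ := hH v w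
  ⟨x, x.2, hx⟩

theorem eq_one_of_apply_eq (hH : IsRegularSub H) {x : Equiv.Perm X} (hx : x ∈ H) {v : X}
    (hxv : x v = v) : x = 1 := by
  obtain ⟨y, -, hy⟩ := hH v v
  exact congrArg Subtype.val ((hy ⟨x, hx⟩ hxv).trans (hy 1 rfl).symm)

theorem card_eq_s3 (hH : IsRegularSub H) (v : X) : Nat.card H = Nat.card X := by
  refine Nat.card_congr (Equiv.ofBijective (fun x : H => (x : Equiv.Perm X) v) ⟨?_, ?_⟩)
  · intro x y hxy
    obtain ⟨z, -, hz⟩ := hH v (x.1 v)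
    exact (hz x rfl).trans (hz y hxy.symm).symm
  · intro w
    obtain ⟨x, hx, hxv⟩ := hH.exists_mem_apply_eq v w
    exact ⟨⟨x, hx⟩, hxv⟩

end IsRegularSub

theorem isRegularSub_of_card_eq {X : Type*} [Finite X] {H : Subgroup (Equiv.Perm X)} (v : X)
    (hfree : ∀ x ∈ H, x v = v → x = 1) (hcard : Nat.card H = Nat.card X) : IsRegularSub H := by
  have hinj : Function.Injective fun x : H => (x : Equiv.Perm X) v := by
    intro x y hxy
    have h1 := hfree _ (H.mul_mem (H.inv_mem y.2) x.2) (by simp [Equiv.Perm.mul_apply, hxy])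
    exact Subtype.ext (inv_mul_eq_one.mp h1).symm
  have hbij := hinj.bijective_of_nat_card_le hcard.ge
  intro u w
  obtain ⟨a, rfl⟩ := hbij.2 u
  obtain ⟨b, rfl⟩ := hbij.2 w
  refine ⟨b * a⁻¹, by simp [Equiv.Perm.mul_apply], fun x hx => eq_mul_inv_of_mul_eq (hinj ?_)⟩
  simpa [Equiv.Perm.mul_apply] using hx

section QuotientCommutative

open scoped IsMulCommutative

variable {K : Type*} [Group K] {N : Subgroup K} [N.Normal]

theorem Subgroup.index_comap_zpowers_mul_orderOf (q : K ⧸ N) :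
    ((zpowers q).comap (QuotientGroup.mk' N)).index * orderOf q = N.index := by
  rw [index_comap_of_surjective _ (QuotientGroup.mk'_surjective N), ← Nat.card_zpowers]
  exact index_mul_card _

theorem Subgroup.orderOf_mk_eq_of_relIndex_eq_prime {G : Subgroup K} {p : ℕ} [Fact p.Prime]
    (hNG : N.relIndex G = p) {b : K} (hbG : b ∈ G) (hbN : b ∉ N) : orderOf (b : K ⧸ N) = p := by
  refine orderOf_eq_prime ?_ (by rwa [Ne, QuotientGroup.eq_one_iff])
  rw [← QuotientGroup.mk_pow, QuotientGroup.eq_one_iff, ← hNG]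
  exact N.pow_relIndex_mem hbG

variable [IsMulCommutative (K ⧸ N)]

theorem Subgroup.normal_of_le_of_isMulCommutative_quotient {H : Subgroup K} (hNH : N ≤ H) :
    H.Normal := by
  rw [← comap_map_eq_self (H := H) (f := QuotientGroup.mk' N) (by rwa [QuotientGroup.ker_mk'])]
  exact (normal_of_isMulCommutative _).comap _

theorem Subgroup.comap_zpowers_mul_inf_eq_bot {G S : Subgroup K} {p : ℕ} (hNG : N ≤ G)
    (hGS : G ⊓ S = ⊥) {a b : K} (haS : a ∈ S) (hap : a ^ p = 1) (hbG : b ∈ G)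
    (hb : orderOf (b : K ⧸ N) = p) :
    (zpowers ((a * b : K) : K ⧸ N)).comap (QuotientGroup.mk' N) ⊓ S = ⊥ := by
  rw [eq_bot_iff]
  rintro x ⟨hx, hxS⟩
  obtain ⟨k, hk⟩ := mem_zpowers_iff.mp (mem_comap.mp hx)
  rw [QuotientGroup.mk'_apply] at hk
  have hxk : (x : K ⧸ N) = (a : K ⧸ N) ^ k * (b : K ⧸ N) ^ k := by
    rw [← hk, QuotientGroup.mk_mul, mul_zpow]
  have hxa : x = a ^ k := by
    have hG : x * (a ^ k)⁻¹ ∈ G := by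
      refine (G.mul_mem_cancel_left (G.inv_mem (G.zpow_mem hbG k))).mp (hNG ?_)
      rw [← QuotientGroup.eq, QuotientGroup.mk_mul, hxk]
      simp [mul_comm]
    have hS : x * (a ^ k)⁻¹ ∈ S := S.mul_mem hxS (S.inv_mem (S.zpow_mem haS k))
    have := (hGS ▸ mem_inf.mpr ⟨hG, hS⟩ : x * (a ^ k)⁻¹ ∈ (⊥ : Subgroup K))
    exact mul_inv_eq_one.mp (mem_bot.mp this)
  have hbk : (b : K ⧸ N) ^ k = 1 := by
    rw [hxa, QuotientGroup.mk_zpow] at hxk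
    exact left_eq_mul.mp hxk
  obtain ⟨j, rfl⟩ := hb ▸ orderOf_dvd_iff_zpow_eq_one.mpr hbk
  rw [mem_bot, hxa, zpow_mul, zpow_natCast, hap, one_zpow]

end QuotientCommutative

section Permutations

open scoped IsMulCommutative

variable {X : Type*} {A G M : Subgroup (Equiv.Perm X)} {v : X}

-- Every `a ∈ A` factors as `γ s` with `γ ∈ G` and `s ∈ A_v`.
theorem normal_subgroupOf_of_transitive (hMA : M ≤ A) (hGA : G ≤ A)
    (htrans : ∀ w, ∃ γ ∈ G, γ v = w) (hGM : ∀ γ ∈ G, ∀ m ∈ M, γ * m * γ⁻¹ ∈ M)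
    (hnorm : ∀ σ ∈ A ⊓ MulAction.stabilizer (Equiv.Perm X) v, ∀ m ∈ M, σ * m * σ⁻¹ ∈ M) :
    (M.subgroupOf A).Normal := by
  rw [normal_subgroupOf_iff hMA]
  intro m a hm ha
  obtain ⟨γ, hγ, hγv⟩ := htrans (a v)
  have hs : γ⁻¹ * a ∈ A ⊓ MulAction.stabilizer (Equiv.Perm X) v :=
    ⟨A.mul_mem (A.inv_mem (hGA hγ)) ha, by
      simp [MulAction.mem_stabilizer_iff, Equiv.Perm.mul_apply, ← hγv]⟩
  convert hGM γ hγ _ (hnorm _ hs m hm) using 1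
  group

theorem pow_relIndex_eq_one_of_apply_eq [(G.subgroupOf A).Normal]
    (hGfree : ∀ x ∈ G, x v = v → x = 1) {σ : Equiv.Perm X} (hσA : σ ∈ A) (hσv : σ v = v) :
    σ ^ G.relIndex A = 1 :=
  hGfree _
    (by simpa [relIndex] using mem_subgroupOf.mp ((G.subgroupOf A).pow_index_mem ⟨σ, hσA⟩))
    (Equiv.Perm.pow_apply_eq_self_of_apply_eq_self hσv _)

theorem isRegularSub_map_subtype_of_index_eq [Finite X] (hGA : G ≤ A) (hGreg : IsRegularSub G)
    {L : Subgroup A} (hL : L ⊓ (MulAction.stabilizer (Equiv.Perm X) v).subgroupOf A = ⊥)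
    (hidx : L.index = G.relIndex A) : IsRegularSub (L.map A.subtype) := by
  refine isRegularSub_of_card_eq v ?_ ?_
  · rintro _ ⟨x, hx, rfl⟩ hxv
    have : x = 1 := by simpa using (hL ▸ mem_inf.mpr ⟨hx, hxv⟩ : x ∈ (⊥ : Subgroup A))
    simp [this]
  · have hcard : Nat.card L = Nat.card (G.subgroupOf A) :=
      Nat.eq_of_mul_eq_mul_right (Nat.pos_of_ne_zero index_ne_zero_of_finite) <|
        (hidx ▸ L.card_mul_index).trans (G.subgroupOf A).card_mul_index.symm
    rw [card_map_of_injective A.subtype_injective, hcard, ← hGreg.card_eq_s3 v,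
      ← card_map_of_injective A.subtype_injective, map_subgroupOf_eq_of_le hGA]

theorem exists_isRegularSub_mul_mem_of_mem_stabilizer [Finite X] {p : ℕ} (hp : p.Prime)
    (hGA : G ≤ A) (hMG : M ≤ G) (hGreg : IsRegularSub G) (hGidx : G.relIndex A = p)
    (hMidx : M.relIndex G = p) [(M.subgroupOf A).Normal] {σ g : Equiv.Perm X} (hσA : σ ∈ A)
    (hσv : σ v = v) (hσ : σ ≠ 1) (hgG : g ∈ G) (hgM : g ∉ M) :
    ∃ H ≤ A, IsRegularSub H ∧ σ * g ∈ H ∧ M ≤ H := by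
  have : Fact p.Prime := ⟨hp⟩
  set N := M.subgroupOf A
  let a : A := ⟨σ, hσA⟩
  let b : A := ⟨g, hGA hgG⟩
  have hQ : Nat.card (A ⧸ N) = p * p := by
    have := relIndex_mul_relIndex M G A hMG hGA
    rw [hMidx, hGidx] at this
    exact this.symm
  have : IsMulCommutative (A ⧸ N) :=
    IsPGroup.isMulCommutative_of_card_eq_prime_sq (hQ.trans (sq p).symm)
  have hNG : N ≤ G.subgroupOf A := fun _ hx => hMG hx
  have : (G.subgroupOf A).Normal := normal_of_le_of_isMulCommutative_quotient hNG
  have hGfree : ∀ x ∈ G, x v = v → x = 1 := fun x hx => hGreg.eq_one_of_apply_eq hx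
  have hap : a ^ p = 1 := Subtype.ext (hGidx ▸ pow_relIndex_eq_one_of_apply_eq hGfree hσA hσv)
  have hb : orderOf (b : A ⧸ N) = p :=
    orderOf_mk_eq_of_relIndex_eq_prime ((relIndex_subgroupOf hGA).trans hMidx) hgG hgM
  have hab : orderOf ((a * b : A) : A ⧸ N) = p := by
    refine orderOf_eq_prime ?_ ?_
    · rw [QuotientGroup.mk_mul, mul_pow, ← QuotientGroup.mk_pow, hap, ← hb, pow_orderOf_eq_one]
      simp
    · rw [Ne, QuotientGroup.eq_one_iff, mem_subgroupOf]
      intro hσg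
      refine hσ (hGfree σ ?_ hσv)
      rw [← mul_inv_cancel_right σ g]
      exact G.mul_mem (hMG hσg) (G.inv_mem hgG)
  have hGS : G.subgroupOf A ⊓ (MulAction.stabilizer (Equiv.Perm X) v).subgroupOf A = ⊥ :=
    eq_bot_iff.mpr fun x ⟨hxG, hxS⟩ => mem_bot.mpr (Subtype.ext (hGfree x hxG hxS))
  have hidx : ((zpowers ((a * b : A) : A ⧸ N)).comap (QuotientGroup.mk' N)).index = p := by
    have := index_comap_zpowers_mul_orderOf ((a * b : A) : A ⧸ N)
    rw [hab] at this
    exact Nat.eq_of_mul_eq_mul_right hp.pos (this.trans hQ)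
  refine ⟨_, map_subtype_le _, isRegularSub_map_subtype_of_index_eq hGA hGreg
    (comap_zpowers_mul_inf_eq_bot hNG hGS (a := a) hσv hap hgG hb) (hidx.trans hGidx.symm),
    ⟨a * b, mem_zpowers _, rfl⟩, fun m hm => ⟨⟨m, hMG.trans hGA hm⟩, ?_, rfl⟩⟩
  change (QuotientGroup.mk' N ⟨m, _⟩) ∈ zpowers _
  rw [QuotientGroup.mk'_apply, (QuotientGroup.eq_one_iff (N := N) ⟨m, _⟩).mpr hm]
  exact one_mem _

end Permutations

theorem stmt_3_general {X : Type*} [Fintype X] (p : ℕ) (hp : p.Prime)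
    (A : Subgroup (Equiv.Perm X))
    (G : Subgroup (Equiv.Perm X)) (hGA : G ≤ A)
    (hGreg : IsRegularSub G) (hGab : ∀ a ∈ G, ∀ b ∈ G, a * b = b * a)
    (hGidx : (G.subgroupOf A).index = p)
    (M : Subgroup (Equiv.Perm X)) (hMG : M ≤ G)
    (hMidx : (M.subgroupOf G).index = p)
    (v : X)
    (hnorm : ∀ σ ∈ A ⊓ MulAction.stabilizer (Equiv.Perm X) v,
      ∀ m ∈ M, σ * m * σ⁻¹ ∈ M)
    (hncent : ¬ ∀ σ ∈ A ⊓ MulAction.stabilizer (Equiv.Perm X) v,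
      ∀ m ∈ M, σ * m = m * σ) :
    ∃ H : Subgroup (Equiv.Perm X), H ≤ A ∧ IsRegularSub H ∧
      ¬ ∀ a ∈ H, ∀ b ∈ H, a * b = b * a := by
  push Not at hncent
  obtain ⟨σ, ⟨hσA, hσv⟩, m₀, hm₀, hσm₀⟩ := hncent
  have hσ : σ ≠ 1 := by
    rintro rfl
    simp at hσm₀
  obtain ⟨g, hgG, hgM⟩ : ∃ g ∈ G, g ∉ M := SetLike.exists_of_lt <| hMG.lt_of_ne <| by
    rintro rfl
    exact hp.one_lt.ne ((relIndex_self M).symm.trans hMidx)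
  have : (M.subgroupOf A).Normal :=
    normal_subgroupOf_of_transitive (hMG.trans hGA) hGA (hGreg.exists_mem_apply_eq v)
      (fun γ hγ m hm => by rwa [hGab γ hγ m (hMG hm), mul_inv_cancel_right]) hnorm
  obtain ⟨H, hHA, hHreg, hσgH, hMH⟩ :=
    exists_isRegularSub_mul_mem_of_mem_stabilizer hp hGA hMG hGreg hGidx hMidx hσA hσv hσ hgG
      hgM
  refine ⟨H, hHA, hHreg, fun hHab => hσm₀ (mul_right_cancel (b := g) ?_)⟩
  rw [mul_assoc, ← hGab g hgG m₀ (hMG hm₀), ← mul_assoc, hHab _ hσgH m₀ (hMH hm₀), mul_assoc]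

/-- If a finite permutation `p`-group `A` has a regular abelian subgroup `G` of index `p`
and `G` has a subgroup `M` of index `p` that is normalised but not centralised by a
point-stabiliser in `A`, then `A` has a regular nonabelian subgroup. -/
theorem stmt_3 {X : Type*} [Fintype X] (p : ℕ) (hp : p.Prime)
    (A : Subgroup (Equiv.Perm X)) (hApow : IsPGroup p A)
    (G : Subgroup (Equiv.Perm X)) (hGA : G ≤ A)
    (hGreg : IsRegularSub G) (hGab : ∀ a ∈ G, ∀ b ∈ G, a * b = b * a)
    (hGidx : (G.subgroupOf A).index = p)
    (M : Subgroup (Equiv.Perm X)) (hMG : M ≤ G)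
    (hMidx : (M.subgroupOf G).index = p)
    (v : X)
    (hnorm : ∀ σ ∈ A ⊓ MulAction.stabilizer (Equiv.Perm X) v,
      ∀ m ∈ M, σ * m * σ⁻¹ ∈ M)
    (hncent : ¬ ∀ σ ∈ A ⊓ MulAction.stabilizer (Equiv.Perm X) v,
      ∀ m ∈ M, σ * m = m * σ) :
    ∃ H : Subgroup (Equiv.Perm X), H ≤ A ∧ IsRegularSub H ∧
      ¬ ∀ a ∈ H, ∀ b ∈ H, a * b = b * a :=
  stmt_3_general p hp A G hGA hGreg hGab hGidx M hMG hMidx v hnorm hncent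
end

section
/- If Γ is a finite proper digraph (i.e., there exist vertices u, v with (u,v) an arc but (v,u) not an arc), then at least one of Γ or its complement Γ̄ is prime with respect to the cartesian product of digraphs. -/
universe u

/-- A digraph is prime with respect to the cartesian product if in any factorisation
into a cartesian product of two digraphs, one factor has exactly one vertex. -/
def IsPrimeDigraph {V : Type u} (adj : V → V → Prop) : Prop :=
  ∀ (V₁ V₂ : Type u) (a1 : V₁ → V₁ → Prop) (a2 : V₂ → V₂ → Prop)
    (e : V ≃ V₁ × V₂),
    (∀ u v : V, adj u v ↔ cartAdj a1 a2 (e u) (e v)) →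
    Nat.card V₁ = 1 ∨ Nat.card V₂ = 1


section Aux

variable {α β γ δ : Type*} {a1 : α → α → Prop} {a2 : β → β → Prop}
  {c1 : γ → γ → Prop} {c2 : δ → δ → Prop}

lemma cartAdj_swap (u v : β × α) :
    cartAdj a1 a2 (Prod.swap u) (Prod.swap v) ↔ cartAdj a2 a1 u v := by
  simp only [cartAdj, Prod.fst_swap, Prod.snd_swap]
  exact or_comm

lemma propagate (g : (α × β) ≃ γ × δ)
    (hc : ∀ x y : α × β, x ≠ y → (cartAdj c1 c2 (g x) (g y) ↔ ¬ cartAdj a1 a2 x y))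
    (a : α) (b b' : β) (hbb : b ≠ b') (h1 : a2 b b') (h2 : ¬ a2 b' b)
    (hp : (g (a, b)).1 = (g (a, b')).1) :
    ∀ a' : α, (g (a', b)).1 = (g (a, b)).1 ∧ (g (a', b')).1 = (g (a, b)).1 := by
  have hxy : ((a, b) : α × β) ≠ (a, b') := by simp [hbb]
  have hqq' : (g (a, b)).2 ≠ (g (a, b')).2 := by
    intro h
    exact hxy (g.injective (Prod.ext hp h))
  have hPxy : cartAdj a1 a2 ((a, b) : α × β) (a, b') := Or.inl ⟨rfl, h1⟩
  have hnQxy : ¬ cartAdj c1 c2 (g (a, b)) (g (a, b')) :=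
    fun hQ => ((hc _ _ hxy).mp hQ) hPxy
  have hnc2 : ¬ c2 (g (a, b)).2 (g (a, b')).2 := fun h => hnQxy (Or.inl ⟨hp, h⟩)
  intro a'
  by_cases haa : a' = a
  · subst haa; exact ⟨rfl, hp.symm⟩
  have hzw : ((a', b) : α × β) ≠ (a', b') := by simp [hbb]
  have hnPyz : ¬ cartAdj a1 a2 ((a, b') : α × β) (a', b) := by
    rintro (⟨h, -⟩ | ⟨h, -⟩)
    · exact haa h.symm
    · exact hbb h.symm
  have hnPzy : ¬ cartAdj a1 a2 ((a', b) : α × β) (a, b') := by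
    rintro (⟨h, -⟩ | ⟨h, -⟩)
    · exact haa h
    · exact hbb h
  have hnPxw : ¬ cartAdj a1 a2 ((a, b) : α × β) (a', b') := by
    rintro (⟨h, -⟩ | ⟨h, -⟩)
    · exact haa h.symm
    · exact hbb h
  have hnPwz : ¬ cartAdj a1 a2 ((a', b') : α × β) (a', b) := by
    rintro (⟨-, h⟩ | ⟨h, -⟩)
    · exact h2 h
    · exact hbb h.symm
  have hQyz : cartAdj c1 c2 (g (a, b')) (g (a', b)) :=
    (hc _ _ (by simp [Ne.symm haa])).mpr hnPyz
  have hQxw : cartAdj c1 c2 (g (a, b)) (g (a', b')) :=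
    (hc _ _ (by simp [Ne.symm haa])).mpr hnPxw
  have hQwz : cartAdj c1 c2 (g (a', b')) (g (a', b)) :=
    (hc _ _ hzw.symm).mpr hnPwz
  -- first: (g (a', b)).1 = (g (a, b)).1
  have hz1 : (g (a', b)).1 = (g (a, b)).1 := by
    by_contra hgz1
    -- then second coords of g y and g z agree
    have hgz2 : (g (a, b')).2 = (g (a', b)).2 := by
      rcases hQyz with ⟨h, -⟩ | ⟨h, -⟩
      · exact absurd (hp ▸ h.symm) hgz1
      · exact h
    rcases hQxw with ⟨hw1, -⟩ | ⟨hw2, -⟩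
    · -- g w has first coord p
      rcases hQwz with ⟨h, -⟩ | ⟨h, -⟩
      · exact hgz1 (h.symm.trans hw1.symm)
      · -- g w = g y
        have : g ((a', b') : α × β) = g ((a, b') : α × β) := by
          refine Prod.ext ?_ ?_
          · exact hw1.symm.trans hp
          · exact h.trans hgz2.symm
        have := g.injective this
        exact haa (congrArg Prod.fst this)
    · rcases hQwz with ⟨-, hcc⟩ | ⟨h, -⟩
      · rw [← hw2, ← hgz2] at hcc
        exact hnc2 hcc
      · exact hqq' ((hw2.trans h).trans hgz2.symm)
  refine ⟨hz1, ?_⟩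
  by_contra hw1
  have hw2 : (g (a, b)).2 = (g (a', b')).2 := by
    rcases hQxw with ⟨h, -⟩ | ⟨h, -⟩
    · exact absurd h.symm hw1
    · exact h
  rcases hQwz with ⟨h, -⟩ | ⟨h, -⟩
  · exact hw1 (h.trans hz1)
  · -- g z = g x
    have : g ((a', b) : α × β) = g ((a, b) : α × β) :=
      Prod.ext hz1 ((h.symm.trans hw2.symm).symm).symm
    have := g.injective this
    exact haa (congrArg Prod.fst this)

lemma mainlem (g : (α × β) ≃ γ × δ)
    (hc : ∀ x y : α × β, x ≠ y → (cartAdj c1 c2 (g x) (g y) ↔ ¬ cartAdj a1 a2 x y))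
    (hα : ∃ x y : α, x ≠ y) (hγ : ∃ x y : γ, x ≠ y)
    (a : α) (b b' : β) (hbb : b ≠ b') (h1 : a2 b b') (h2 : ¬ a2 b' b)
    (hp : (g (a, b)).1 = (g (a, b')).1) : False := by
  set p := (g (a, b)).1 with hpdef
  set q := (g (a, b)).2 with hqdef
  set q' := (g (a, b')).2 with hq'def
  have hxy : ((a, b) : α × β) ≠ (a, b') := by simp [hbb]
  have hqq' : q ≠ q' := by
    intro h
    exact hxy (g.injective (Prod.ext hp (by rw [← hqdef, ← hq'def, h])))
  have hgx : g ((a, b) : α × β) = (p, q) := rfl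
  have hgy : g ((a, b') : α × β) = (p, q') := Prod.ext hp.symm rfl
  have hPxy : cartAdj a1 a2 ((a, b) : α × β) (a, b') := Or.inl ⟨rfl, h1⟩
  have hnQxy : ¬ cartAdj c1 c2 (g (a, b)) (g (a, b')) :=
    fun hQ => ((hc _ _ hxy).mp hQ) hPxy
  have hnc2 : ¬ c2 q q' := fun h => hnQxy (Or.inl ⟨hp, h⟩)
  have hnPyx : ¬ cartAdj a1 a2 ((a, b') : α × β) (a, b) := by
    rintro (⟨-, h⟩ | ⟨h, -⟩)
    · exact h2 h
    · exact hbb h.symm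
  have hQyx : cartAdj c1 c2 (g (a, b')) (g (a, b)) := (hc _ _ hxy.symm).mpr hnPyx
  have hc2q'q : c2 q' q := by
    rcases hQyx with ⟨-, h⟩ | ⟨h, -⟩
    · rw [hgy, hgx] at h; exact h
    · rw [hgy, hgx] at h; exact absurd h.symm hqq'
  -- dual complement hypothesis
  have hc' : ∀ x y : γ × δ, x ≠ y →
      (cartAdj a1 a2 (g.symm x) (g.symm y) ↔ ¬ cartAdj c1 c2 x y) := by
    intro x y hxy'
    have hne : g.symm x ≠ g.symm y := fun h => hxy' (g.symm.injective h)
    have h := hc (g.symm x) (g.symm y) hne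
    rw [g.apply_symm_apply, g.apply_symm_apply] at h
    exact iff_not_comm.mp h
  -- dual propagate
  have hsymy : g.symm (p, q') = (a, b') := by rw [← hgy, g.symm_apply_apply]
  have hsymx : g.symm (p, q) = (a, b) := by rw [← hgx, g.symm_apply_apply]
  have H2 := propagate g.symm hc' p q' q hqq'.symm hc2q'q hnc2
    (by rw [hsymy, hsymx])
  -- pick p₂ ≠ p
  obtain ⟨p0, p1, hpp⟩ := hγ
  obtain ⟨p₂, hp₂⟩ : ∃ p₂ : γ, p₂ ≠ p := by
    by_cases h : p0 = p
    · exact ⟨p1, fun hh => hpp (h.trans hh.symm)⟩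
    · exact ⟨p0, h⟩
  have hA := (H2 p₂).2  -- (g.symm (p₂, q)).1 = (g.symm (p, q')).1 = a
  have hB := (H2 p₂).1
  rw [hsymy] at hA hB
  have hA' : (g.symm ((p₂, q) : γ × δ)).1 = a := hA
  have hB' : (g.symm ((p₂, q') : γ × δ)).1 = a := hB
  set b₂ := (g.symm ((p₂, q) : γ × δ)).2 with hb₂def
  set b₂' := (g.symm ((p₂, q') : γ × δ)).2 with hb₂'def
  have hgb₂ : g ((a, b₂) : α × β) = (p₂, q) := by
    have h' : ((a, b₂) : α × β) = g.symm (p₂, q) := by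
      refine Prod.ext ?_ ?_
      · exact hA'.symm
      · rfl
    rw [h', g.apply_symm_apply]
  have hgb₂' : g ((a, b₂') : α × β) = (p₂, q') := by
    have h' : ((a, b₂') : α × β) = g.symm (p₂, q') := by
      refine Prod.ext ?_ ?_
      · exact hB'.symm
      · rfl
    rw [h', g.apply_symm_apply]
  have hb₂b : b₂ ≠ b := by
    intro h
    rw [h, hgx] at hgb₂
    exact hp₂ (congrArg Prod.fst hgb₂.symm)
  have hb₂b' : b₂ ≠ b' := by
    intro h
    rw [h, hgy] at hgb₂
    exact hp₂ (congrArg Prod.fst hgb₂.symm)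
  have hb₂b₂' : b₂ ≠ b₂' := by
    intro h
    rw [h, hgb₂'] at hgb₂
    have h' := congrArg Prod.snd hgb₂
    exact hqq' h'.symm
  obtain ⟨a0, a1', haa'⟩ := hα
  obtain ⟨a', ha'⟩ : ∃ a' : α, a' ≠ a := by
    by_cases h : a0 = a
    · exact ⟨a1', fun hh => haa' (h.trans hh.symm)⟩
    · exact ⟨a0, h⟩
  have hQ1 : cartAdj c1 c2 (g (a', b₂)) (g (a, b)) := by
    refine (hc _ _ (by simp [ha'])).mpr ?_
    rintro (⟨h, -⟩ | ⟨h, -⟩)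
    · exact ha' h
    · exact hb₂b h
  have hQ2 : cartAdj c1 c2 (g (a', b₂)) (g (a, b')) := by
    refine (hc _ _ (by simp [ha'])).mpr ?_
    rintro (⟨h, -⟩ | ⟨h, -⟩)
    · exact ha' h
    · exact hb₂b' h
  have hQ3 : cartAdj c1 c2 (g (a', b₂)) (g (a, b₂')) := by
    refine (hc _ _ (by simp [ha'])).mpr ?_
    rintro (⟨h, -⟩ | ⟨h, -⟩)
    · exact ha' h
    · exact hb₂b₂' h
  have hG1 : (g ((a', b₂) : α × β)).1 = p := by
    by_contra hG
    have hG2 : (g ((a', b₂) : α × β)).2 = q := by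
      rcases hQ1 with ⟨h, -⟩ | ⟨h, -⟩
      · rw [hgx] at h; exact absurd h hG
      · rw [hgx] at h; exact h
    rcases hQ2 with ⟨h, -⟩ | ⟨h, -⟩
    · rw [hgy] at h; exact hG h
    · rw [hgy] at h; exact hqq' (hG2.symm.trans h)
  rcases hQ3 with ⟨h, -⟩ | ⟨h, -⟩
  · rw [hgb₂'] at h
    exact hp₂ (hG1 ▸ h).symm
  · rw [hgb₂'] at h
    have : g ((a', b₂) : α × β) = g ((a, b') : α × β) := by
      rw [hgy]; exact Prod.ext hG1 h
    exact ha' (congrArg Prod.fst (g.injective this))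

lemma mainlem' (g : (α × β) ≃ γ × δ)
    (hc : ∀ x y : α × β, x ≠ y → (cartAdj c1 c2 (g x) (g y) ↔ ¬ cartAdj a1 a2 x y))
    (hα : ∃ x y : α, x ≠ y) (hγ : ∃ x y : γ, x ≠ y) (hδ : ∃ x y : δ, x ≠ y)
    (a : α) (b b' : β) (hbb : b ≠ b') (h1 : a2 b b') (h2 : ¬ a2 b' b) : False := by
  have hxy : ((a, b) : α × β) ≠ (a, b') := by simp [hbb]
  have hnPyx : ¬ cartAdj a1 a2 ((a, b') : α × β) (a, b) := by
    rintro (⟨-, h⟩ | ⟨h, -⟩)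
    · exact h2 h
    · exact hbb h.symm
  have hQyx : cartAdj c1 c2 (g (a, b')) (g (a, b)) := (hc _ _ hxy.symm).mpr hnPyx
  rcases hQyx with ⟨h, -⟩ | ⟨h, -⟩
  · exact mainlem g hc hα hγ a b b' hbb h1 h2 h.symm
  · -- swap target factors
    set g₂ : (α × β) ≃ δ × γ := g.trans (Equiv.prodComm γ δ) with hg₂
    have hc₂ : ∀ x y : α × β, x ≠ y →
        (cartAdj c2 c1 (g₂ x) (g₂ y) ↔ ¬ cartAdj a1 a2 x y) := by
      intro x y hxy'
      have : g₂ x = Prod.swap (g x) := rfl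
      rw [this, show g₂ y = Prod.swap (g y) from rfl, cartAdj_swap]
      exact hc x y hxy'
    refine mainlem g₂ hc₂ hα hδ a b b' hbb h1 h2 ?_
    show (g ((a, b) : α × β)).2 = (g ((a, b') : α × β)).2
    exact h.symm

lemma exists_pair_ne_of_card_ne_one {X : Type*} [Finite X] [Nonempty X]
    (h : Nat.card X ≠ 1) : ∃ x y : X, x ≠ y := by
  have hpos : 0 < Nat.card X := Nat.card_pos
  have : 1 < Nat.card X := lt_of_le_of_ne hpos (Ne.symm h)
  have := Finite.one_lt_card_iff_nontrivial.mp this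
  exact exists_pair_ne X

end Aux

/-- If `Γ` is a finite proper digraph, then `Γ` or its complement is prime with
respect to the cartesian product. -/
theorem stmt_6 {V : Type u} [Fintype V] (adj : V → V → Prop)
    (hloop : ∀ v : V, ¬ adj v v)
    (hproper : ∃ u v : V, adj u v ∧ ¬ adj v u) :
    IsPrimeDigraph adj ∨ IsPrimeDigraph (fun u v : V => u ≠ v ∧ ¬ adj u v) := by
  by_contra hcon
  push_neg at hcon
  obtain ⟨h₁, h₂⟩ := hcon
  simp only [IsPrimeDigraph] at h₁ h₂
  push_neg at h₁ h₂
  obtain ⟨V₁, V₂, a1, a2, e, he, hV₁, hV₂⟩ := h₁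
  obtain ⟨W₁, W₂, c1, c2, f, hf, hW₁, hW₂⟩ := h₂
  obtain ⟨u, v, huv, hvu⟩ := hproper
  have finp : Finite (V₁ × V₂) := Finite.of_equiv V e
  have finq : Finite (W₁ × W₂) := Finite.of_equiv V f
  have : Nonempty V₁ := ⟨(e u).1⟩
  have : Nonempty V₂ := ⟨(e u).2⟩
  have : Nonempty W₁ := ⟨(f u).1⟩
  have : Nonempty W₂ := ⟨(f u).2⟩
  have : Finite V₁ := Finite.prod_left V₂
  have : Finite V₂ := Finite.prod_right V₁
  have : Finite W₁ := Finite.prod_left W₂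
  have : Finite W₂ := Finite.prod_right W₁
  have hntV₁ := exists_pair_ne_of_card_ne_one hV₁
  have hntV₂ := exists_pair_ne_of_card_ne_one hV₂
  have hntW₁ := exists_pair_ne_of_card_ne_one hW₁
  have hntW₂ := exists_pair_ne_of_card_ne_one hW₂
  set g : (V₁ × V₂) ≃ W₁ × W₂ := e.symm.trans f with hg
  have hc : ∀ x y : V₁ × V₂, x ≠ y →
      (cartAdj c1 c2 (g x) (g y) ↔ ¬ cartAdj a1 a2 x y) := by
    intro x y hxy
    have hne : e.symm x ≠ e.symm y := fun h => hxy (e.symm.injective h)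
    have h1 := hf (e.symm x) (e.symm y)
    have h2 := he (e.symm x) (e.symm y)
    rw [e.apply_symm_apply, e.apply_symm_apply] at h2
    have : g x = f (e.symm x) := rfl
    rw [this, show g y = f (e.symm y) from rfl, ← h1, ← h2]
    simp [hne]
  have hP : cartAdj a1 a2 (e u) (e v) := (he u v).mp huv
  have hnP : ¬ cartAdj a1 a2 (e v) (e u) := fun h => hvu ((he v u).mpr h)
  have hne : e u ≠ e v := by
    intro h
    have := e.injective h
    subst this
    exact hloop u huv
  rcases hP with ⟨hsh, ha⟩ | ⟨hsh, ha⟩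
  · -- e u and e v share first coordinate
    have hbb : (e u).2 ≠ (e v).2 := fun h => hne (Prod.ext hsh h)
    have h2' : ¬ a2 (e v).2 (e u).2 := fun h => hnP (Or.inl ⟨hsh.symm, h⟩)
    have hc' : ∀ x y : V₁ × V₂, x ≠ y →
        (cartAdj c1 c2 (g x) (g y) ↔ ¬ cartAdj a1 a2 x y) := hc
    have ha2 : a2 ((e u).1, (e u).2).2 ((e u).1, (e v).2).2 := ha
    refine mainlem' g hc hntV₁ hntW₁ hntW₂ (e u).1 (e u).2 (e v).2 hbb ha h2'
  · -- e u and e v share second coordinate: swap source factors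
    have hbb : (e u).1 ≠ (e v).1 := fun h => hne (Prod.ext h hsh)
    have h2' : ¬ a1 (e v).1 (e u).1 := fun h => hnP (Or.inr ⟨hsh.symm, h⟩)
    set gs : (V₂ × V₁) ≃ W₁ × W₂ := (Equiv.prodComm V₂ V₁).trans g with hgs
    have hcs : ∀ x y : V₂ × V₁, x ≠ y →
        (cartAdj c1 c2 (gs x) (gs y) ↔ ¬ cartAdj a2 a1 x y) := by
      intro x y hxy
      have hne' : Prod.swap x ≠ Prod.swap y := fun h => hxy (Prod.swap_injective h)
      have := hc (Prod.swap x) (Prod.swap y) hne'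
      rw [cartAdj_swap] at this
      exact this
    exact mainlem' gs hcs hntV₂ hntW₁ hntW₂ (e u).2 (e u).1 (e v).1 hbb ha h2'
end

section
/- Let p be an odd prime, G ≅ Z_p³ with generators x, y, z, α the automorphism sending (x,y,z) to (xy, yz, z), and S = {x^{α^i}, y^{α^i} : i ∈ ℤ}. Then |S| = 2p, and the induced subdigraph of Cay(G,S) on S has exactly 2p arcs, namely (x^{α^i}, x^{α^{i+1}}) and (y^{α^i}, x^{α^{i+1}}) for i ∈ Z_p. -/
/-!
Since `G` has exponent `p`, order `p³` and is generated by `x, y, z`, the map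
`(a, b, c) ↦ x^a y^b z^c` from `𝔽_p³` to `G` is an isomorphism. In these coordinates `α` acts by
`(a, b, c) ↦ (a, a + b, b + c)`, so `x^{α^i} = (1, i, i(i-1)/2)` and `y^{α^i} = (0, 1, i)`
(here `p` odd is used to divide by `2`). An arc `u → v` inside `S` means `v - u ∈ S`; since the
first coordinates of points of `S` are `1` or `0`, the only such differences are
`x^{α^{i+1}} - x^{α^i} = y^{α^i}` and `x^{α^{i+1}} - y^{α^i} = x^{α^i}`.
-/

open Function Set

theorem MulEquiv.zpow_apply_eq_of_map_eq {M : Type*} [Mul M] {α : M ≃* M} {g : M} (f : ℤ → M)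
    (h0 : f 0 = g) (hstep : ∀ i, α (f i) = f (i + 1)) (i : ℤ) : (α ^ i) g = f i := by
  have hsucc : ∀ j : ℤ, (α ^ (j + 1)) g = α ((α ^ j) g) := fun j => by
    rw [add_comm, zpow_add, zpow_one]; rfl
  induction i using Int.induction_on with
  | zero => simp [h0]
  | succ n ih => rw [hsucc, ih, hstep]
  | pred n ih =>
    apply α.injective
    rw [← hsucc, hstep, sub_add_cancel, ih]

theorem Set.ncard_range_union_range {ι β : Type*} [Finite ι] {f g : ι → β} (hf : Injective f)
    (hg : Injective g) (hfg : ∀ a b, f a ≠ g b) :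
    (range f ∪ range g).ncard = 2 * Nat.card ι := by
  rw [← Set.Sum.elim_range, Set.ncard_range_of_injective (hf.sumElim hg hfg), Nat.card_sum]
  ring

section OrbitCoordinates

variable {K : Type*} [Field K]

-- The coordinates of `x^{α^a}` and `y^{α^a}` with respect to `x, y, z`.
def orbitX (a : K) : K × K × K := (1, a, a * (a - 1) / 2)

def orbitY (a : K) : K × K × K := (0, 1, a)

def orbitSet : Set (K × K × K) := range orbitX ∪ range orbitY

theorem orbitX_injective : Injective (orbitX : K → K × K × K) :=
  fun _ _ h => congrArg (·.2.1) h

theorem orbitY_injective : Injective (orbitY : K → K × K × K) :=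
  fun _ _ h => congrArg (·.2.2) h

theorem orbitX_ne_orbitY (a b : K) : orbitX a ≠ orbitY b :=
  fun h => one_ne_zero (congrArg (·.1) h)

theorem orbitX_add_one_sub_orbitX (h2 : (2 : K) ≠ 0) (a : K) :
    orbitX (a + 1) - orbitX a = orbitY a := by
  simp only [orbitX, orbitY, Prod.mk_sub_mk, Prod.mk.injEq]
  refine ⟨by ring, by ring, ?_⟩
  field_simp
  ring

theorem orbitX_add_one_sub_orbitY (h2 : (2 : K) ≠ 0) (a : K) :
    orbitX (a + 1) - orbitY a = orbitX a := by
  simp only [orbitX, orbitY, Prod.mk_sub_mk, Prod.mk.injEq]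
  refine ⟨by ring, by ring, ?_⟩
  field_simp
  ring

theorem sub_mem_orbitSet_iff (h2 : (2 : K) ≠ 0) {s t : K × K × K} (hs : s ∈ orbitSet)
    (ht : t ∈ orbitSet) :
    t - s ∈ orbitSet ↔ ∃ a, (s = orbitX a ∨ s = orbitY a) ∧ t = orbitX (a + 1) := by
  constructor
  -- Eight cases; comparing first coordinates (`1` on `orbitX`, `0` on `orbitY`) leaves two.
  · rintro (⟨k, hk⟩ | ⟨k, hk⟩) <;>
        obtain ⟨i, rfl⟩ | ⟨i, rfl⟩ := hs <;> obtain ⟨j, rfl⟩ | ⟨j, rfl⟩ := ht <;>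
        simp only [orbitX, orbitY, Prod.mk_sub_mk, Prod.mk.injEq] at hk
    · exact absurd (by linear_combination hk.1) (one_ne_zero (α := K))
    · exact absurd (by linear_combination hk.1) h2
    · obtain ⟨-, rfl, hC⟩ := hk
      have hj : 2 * (j - (i + 1)) = 0 := by field_simp at hC; linear_combination -hC
      refine ⟨i, Or.inr rfl, congrArg orbitX ?_⟩
      linear_combination (mul_eq_zero.1 hj).resolve_left h2
    · exact absurd (by linear_combination hk.1) (one_ne_zero (α := K))
    · exact ⟨i, Or.inl rfl, congrArg orbitX (by linear_combination -hk.2.1)⟩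
    · exact absurd (by linear_combination hk.1) (one_ne_zero (α := K))
    · exact absurd (by linear_combination -hk.1) (one_ne_zero (α := K))
    · exact absurd (by linear_combination hk.2.1) (one_ne_zero (α := K))
  · rintro ⟨a, rfl | rfl, rfl⟩
    · exact Or.inr ⟨a, (orbitX_add_one_sub_orbitX h2 a).symm⟩
    · exact Or.inl ⟨a, (orbitX_add_one_sub_orbitY h2 a).symm⟩

theorem ncard_orbitSet [Finite K] : (orbitSet : Set (K × K × K)).ncard = 2 * Nat.card K :=
  ncard_range_union_range orbitX_injective orbitY_injective orbitX_ne_orbitY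

theorem ncard_orbitSet_arcs [Finite K] (h2 : (2 : K) ≠ 0) :
    {r : (K × K × K) × (K × K × K) | r.1 ∈ orbitSet ∧ r.2 ∈ orbitSet ∧ r.2 - r.1 ∈ orbitSet}.ncard
      = 2 * Nat.card K := by
  have harcs : {r : (K × K × K) × (K × K × K) |
      r.1 ∈ orbitSet ∧ r.2 ∈ orbitSet ∧ r.2 - r.1 ∈ orbitSet} =
      range (fun a => (orbitX a, orbitX (a + 1))) ∪
        range (fun a => (orbitY a, orbitX (a + 1))) := by
    ext ⟨s, t⟩
    constructor
    · rintro ⟨hs, ht, hst⟩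
      obtain ⟨a, rfl | rfl, rfl⟩ := (sub_mem_orbitSet_iff h2 hs ht).1 hst
      exacts [Or.inl ⟨a, rfl⟩, Or.inr ⟨a, rfl⟩]
    · rintro (⟨a, hst⟩ | ⟨a, hst⟩) <;> obtain ⟨rfl, rfl⟩ := Prod.mk.inj hst
      · exact ⟨Or.inl ⟨a, rfl⟩, Or.inl ⟨a + 1, rfl⟩,
          Or.inr ⟨a, (orbitX_add_one_sub_orbitX h2 a).symm⟩⟩
      · exact ⟨Or.inr ⟨a, rfl⟩, Or.inl ⟨a + 1, rfl⟩,
          Or.inl ⟨a, (orbitX_add_one_sub_orbitY h2 a).symm⟩⟩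
  rw [harcs]
  exact ncard_range_union_range (fun a b h => orbitX_injective (congrArg Prod.fst h))
    (fun a b h => orbitY_injective (congrArg Prod.fst h))
    (fun a b h => orbitX_ne_orbitY a b (congrArg Prod.fst h))

end OrbitCoordinates

section Coordinates

variable {G : Type*} [CommGroup G] {p : ℕ}

theorem pow_val_add [NeZero p] {g : G} (hg : g ^ p = 1) (a b : ZMod p) :
    g ^ (a + b).val = g ^ a.val * g ^ b.val := by
  rw [ZMod.val_add, ← pow_add]
  conv_rhs => rw [← Nat.mod_add_div (a.val + b.val) p]
  rw [pow_add, pow_mul, hg, one_pow, mul_one]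

def ofCoords (x y z : G) (t : ZMod p × ZMod p × ZMod p) : G :=
  x ^ t.1.val * y ^ t.2.1.val * z ^ t.2.2.val

variable [NeZero p] {x y z : G}

theorem ofCoords_add (hexp : ∀ g : G, g ^ p = 1) (s t : ZMod p × ZMod p × ZMod p) :
    ofCoords x y z (s + t) = ofCoords x y z s * ofCoords x y z t := by
  simp only [ofCoords, Prod.fst_add, Prod.snd_add, pow_val_add (hexp _)]
  ac_rfl

theorem ofCoords_sub (hexp : ∀ g : G, g ^ p = 1) (s t : ZMod p × ZMod p × ZMod p) :
    ofCoords x y z (t - s) = ofCoords x y z t * (ofCoords x y z s)⁻¹ := by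
  rw [eq_mul_inv_iff_mul_eq, ← ofCoords_add hexp, sub_add_cancel]

theorem ofCoords_surjective (hexp : ∀ g : G, g ^ p = 1) [Fact (1 < p)]
    (hgen : Subgroup.closure {x, y, z} = ⊤) :
    Surjective (ofCoords x y z : ZMod p × ZMod p × ZMod p → G) := by
  let f : Multiplicative (ZMod p × ZMod p × ZMod p) →* G :=
    MonoidHom.mk' (ofCoords x y z ∘ Multiplicative.toAdd) (ofCoords_add hexp)
  have hf : Subgroup.closure {x, y, z} ≤ f.range := by
    rw [Subgroup.closure_le, Set.insert_subset_iff, Set.insert_subset_iff,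
      Set.singleton_subset_iff]
    exact ⟨⟨.ofAdd (1, 0, 0), show ofCoords x y z (1, 0, 0) = x by simp [ofCoords, ZMod.val_one]⟩,
      ⟨.ofAdd (0, 1, 0), show ofCoords x y z (0, 1, 0) = y by simp [ofCoords, ZMod.val_one]⟩,
      ⟨.ofAdd (0, 0, 1), show ofCoords x y z (0, 0, 1) = z by simp [ofCoords, ZMod.val_one]⟩⟩
  intro g
  obtain ⟨t, ht⟩ := hf (hgen ▸ Subgroup.mem_top g)
  exact ⟨t.toAdd, ht⟩

theorem ofCoords_bijective (hexp : ∀ g : G, g ^ p = 1) [Fact (1 < p)] (hcard : Nat.card G = p ^ 3)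
    (hgen : Subgroup.closure {x, y, z} = ⊤) :
    Bijective (ofCoords x y z : ZMod p × ZMod p × ZMod p → G) :=
  (ofCoords_surjective hexp hgen).bijective_of_nat_card_le (le_of_eq (by simp [hcard]; ring))

theorem map_ofCoords (hexp : ∀ g : G, g ^ p = 1) {α : G ≃* G} (hx : α x = x * y)
    (hy : α y = y * z) (hz : α z = z) (a b c : ZMod p) :
    α (ofCoords x y z (a, b, c)) = ofCoords x y z (a, a + b, b + c) := by
  simp only [ofCoords, map_mul, map_pow, hx, hy, hz, mul_pow, pow_val_add (hexp _)]
  ac_rfl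

end Coordinates

section Orbits

variable {G : Type*} [CommGroup G] {p : ℕ} [Fact p.Prime] {x y z : G} {α : G ≃* G}

theorem zpow_apply_eq_ofCoords_orbitY (hexp : ∀ g : G, g ^ p = 1) (hx : α x = x * y)
    (hy : α y = y * z) (hz : α z = z) (i : ℤ) :
    (α ^ i) y = ofCoords x y z (orbitY (i : ZMod p)) := by
  refine MulEquiv.zpow_apply_eq_of_map_eq (fun i : ℤ => ofCoords x y z (orbitY (i : ZMod p))) ?_
    (fun i => ?_) i
  · simp [orbitY, ofCoords, ZMod.val_one]
  · rw [orbitY, map_ofCoords hexp hx hy hz]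
    simp [orbitY, add_comm]

theorem zpow_apply_eq_ofCoords_orbitX (hexp : ∀ g : G, g ^ p = 1) (h2 : (2 : ZMod p) ≠ 0)
    (hx : α x = x * y) (hy : α y = y * z) (hz : α z = z) (i : ℤ) :
    (α ^ i) x = ofCoords x y z (orbitX (i : ZMod p)) := by
  refine MulEquiv.zpow_apply_eq_of_map_eq (fun i : ℤ => ofCoords x y z (orbitX (i : ZMod p))) ?_
    (fun i => ?_) i
  · simp [orbitX, ofCoords, ZMod.val_one]
  · rw [orbitX, map_ofCoords hexp hx hy hz]
    simp only [orbitX, Int.cast_add, Int.cast_one]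
    congr 3
    · exact add_comm _ _
    · field_simp
      ring

end Orbits

section CayleyDigraph

variable {G : Type*} [CommGroup G] {p : ℕ} [NeZero p] {x y z : G}

theorem cayAdj_image_ofCoords_iff (hexp : ∀ g : G, g ^ p = 1)
    (hinj : Injective (ofCoords x y z : ZMod p × ZMod p × ZMod p → G))
    (O : Set (ZMod p × ZMod p × ZMod p)) (s t : ZMod p × ZMod p × ZMod p) :
    cayAdj G (ofCoords x y z '' O) (ofCoords x y z s) (ofCoords x y z t) ↔ t - s ∈ O := by
  rw [cayAdj, ← ofCoords_sub hexp, hinj.mem_set_image]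

theorem setOf_arc_image_ofCoords (hexp : ∀ g : G, g ^ p = 1)
    (hinj : Injective (ofCoords x y z : ZMod p × ZMod p × ZMod p → G))
    (O : Set (ZMod p × ZMod p × ZMod p)) :
    {q : G × G | q.1 ∈ ofCoords x y z '' O ∧ q.2 ∈ ofCoords x y z '' O ∧
        cayAdj G (ofCoords x y z '' O) q.1 q.2} =
      Prod.map (ofCoords x y z) (ofCoords x y z) '' {r | r.1 ∈ O ∧ r.2 ∈ O ∧ r.2 - r.1 ∈ O} := by
  ext ⟨u, v⟩
  constructor
  · rintro ⟨⟨s, hs, rfl⟩, ⟨t, ht, rfl⟩, hst⟩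
    exact ⟨(s, t), ⟨hs, ht, (cayAdj_image_ofCoords_iff hexp hinj O s t).1 hst⟩, rfl⟩
  · rintro ⟨⟨s, t⟩, ⟨hs, ht, hst⟩, h⟩
    obtain ⟨rfl, rfl⟩ := Prod.mk.inj h
    exact ⟨mem_image_of_mem _ hs, mem_image_of_mem _ ht,
      (cayAdj_image_ofCoords_iff hexp hinj O s t).2 hst⟩

end CayleyDigraph

theorem stmt_9_general {G : Type*} [CommGroup G] (p : ℕ) (hp : p.Prime)
    (hodd : Odd p) (hcard : Nat.card G = p ^ 3) (hexp : ∀ g : G, g ^ p = 1)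
    (x y z : G) (hgen : Subgroup.closure {x, y, z} = ⊤)
    (α : G ≃* G) (hx : α x = x * y) (hy : α y = y * z) (hz : α z = z)
    (S : Set G) (hS : S = {g | ∃ i : ℤ, g = (α ^ i) x ∨ g = (α ^ i) y}) :
    S.ncard = 2 * p ∧
    {q : G × G | q.1 ∈ S ∧ q.2 ∈ S ∧ cayAdj G S q.1 q.2}.ncard = 2 * p ∧
    (∀ u ∈ S, ∀ v ∈ S, (cayAdj G S u v ↔
      ∃ i : ℤ, (u = (α ^ i) x ∨ u = (α ^ i) y) ∧ v = (α ^ (i + 1)) x)) := by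
  have : Fact p.Prime := ⟨hp⟩
  have h2 : (2 : ZMod p) ≠ 0 := Ring.two_ne_zero <| by
    rw [ZMod.ringChar_zmod_n]
    rintro rfl
    exact absurd hodd (by decide)
  have hinj := (ofCoords_bijective hexp hcard hgen).injective
  have hαx := zpow_apply_eq_ofCoords_orbitX hexp h2 hx hy hz
  have hαy := zpow_apply_eq_ofCoords_orbitY hexp hx hy hz
  have hS' : S = ofCoords x y z '' (orbitSet : Set (ZMod p × ZMod p × ZMod p)) := by
    ext g
    simp only [hS, orbitSet, image_union, ← range_comp, mem_ofPred_eq, mem_union, mem_range,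
      comp_apply, hαx, hαy, ← exists_or, ZMod.intCast_surjective.exists, eq_comm]
  subst hS'
  refine ⟨?_, ?_, ?_⟩
  · rw [ncard_image_of_injective _ hinj, ncard_orbitSet, Nat.card_zmod]
  · rw [setOf_arc_image_ofCoords hexp hinj, ncard_image_of_injective _ (hinj.prodMap hinj),
      ncard_orbitSet_arcs h2, Nat.card_zmod]
  · rintro _ ⟨s, hs, rfl⟩ _ ⟨t, ht, rfl⟩
    rw [cayAdj_image_ofCoords_iff hexp hinj, sub_mem_orbitSet_iff h2 hs ht,
      ZMod.intCast_surjective.exists]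
    simp only [hαx, hαy, hinj.eq_iff, Int.cast_add, Int.cast_one]

/-- For `G ≅ Z_p³` and `α : (x,y,z) ↦ (xy, yz, z)`, the connection set
`S = {x^{α^i}, y^{α^i} : i ∈ ℤ}` has `2p` elements, and the induced subdigraph of
`Cay(G,S)` on `S` has exactly the `2p` arcs `(x^{α^i}, x^{α^{i+1}})` and
`(y^{α^i}, x^{α^{i+1}})`. -/
theorem stmt_9 {G : Type*} [CommGroup G] [Fintype G] (p : ℕ) (hp : p.Prime)
    (hodd : Odd p) (hcard : Nat.card G = p ^ 3) (hexp : ∀ g : G, g ^ p = 1)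
    (x y z : G) (hgen : Subgroup.closure {x, y, z} = ⊤)
    (α : G ≃* G) (hx : α x = x * y) (hy : α y = y * z) (hz : α z = z)
    (S : Set G) (hS : S = {g | ∃ i : ℤ, g = (α ^ i) x ∨ g = (α ^ i) y}) :
    S.ncard = 2 * p ∧
    {q : G × G | q.1 ∈ S ∧ q.2 ∈ S ∧ cayAdj G S q.1 q.2}.ncard = 2 * p ∧
    (∀ u ∈ S, ∀ v ∈ S, (cayAdj G S u v ↔
      ∃ i : ℤ, (u = (α ^ i) x ∨ u = (α ^ i) y) ∧ v = (α ^ (i + 1)) x)) :=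
  stmt_9_general p hp hodd hcard hexp x y z hgen α hx hy hz S hS
end

section
/- Let p be an odd prime, n ≥ 2, and G ≅ Z_{p^n} × Z_p. Then there exists a proper Cayley digraph Γ on G with Cayley index exactly p whose automorphism group contains a nonabelian regular subgroup. -/
/-!
Write `V = ℤ/p^(m+2) × ℤ/p` multiplicatively, with `x = (1, 0)`, `y = (0, 1)`, and let `α` be
the automorphism `(a, b) ↦ (a + p^(m+1) b, a + b)`, of order `p`. The connection set is the
union of the orbits `xᵢ = αⁱ x` and `y_b = α^b y`, and the only arcs inside it are `xᵢ → xᵢ₊₁`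
(since `xᵢ₊₁ = xᵢ yᵢ`) and `y_b → x_{b+1}`. So an automorphism fixing `1` shifts both orbits by a
common `k`; composing with `α⁻ᵏ` it fixes `1` and all its out-neighbours, and then, vertex by
vertex, the out-neighbours of each of those: it is the identity. Thus the stabiliser of `1` is
`⟨α⟩`, `Aut Γ = V ⋊ ⟨α⟩` and the Cayley index is `p`. The maps `v ↦ α^(a mod p) v * g`, for
`g = (a, b)`, form a regular subgroup, nonabelian because `α` moves `y`.
-/

section CayleyDigraph

variable {G : Type*} [Group G] (S : Set G)

theorem cayAdj_one_left (v : G) : cayAdj G S 1 v ↔ v ∈ S := by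
  simp [cayAdj]

theorem cayAdj_mul_right_iff (u v g : G) : cayAdj G S (u * g) (v * g) ↔ cayAdj G S u v := by
  simp [cayAdj, mul_assoc]

theorem rightReg_apply (g v : G) : rightReg G g v = v * g⁻¹ := rfl

theorem mulRight_mem_dAut (g : G) : Equiv.mulRight g ∈ dAut (cayAdj G S) :=
  fun u v => cayAdj_mul_right_iff S u v g

@[simp] theorem MulAut.toPerm_apply (φ : MulAut G) (g : G) : MulAut.toPerm G φ g = φ g := rfl

theorem toPerm_mem_dAut {φ : MulAut G} (hφ : ∀ g, φ g ∈ S ↔ g ∈ S) :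
    MulAut.toPerm G φ ∈ dAut (cayAdj G S) := by
  intro u v
  simp only [cayAdj, MulAut.toPerm_apply, ← map_inv, ← map_mul, hφ]

theorem apply_mem_of_mem_dAut {σ : Equiv.Perm G} (hσ : σ ∈ dAut (cayAdj G S)) (h1 : σ 1 = 1)
    {s : G} (hs : s ∈ S) : σ s ∈ S := by
  have := (hσ 1 s).mpr ((cayAdj_one_left S s).mpr hs)
  rwa [h1, cayAdj_one_left] at this

theorem isPretransitive_dAut : MulAction.IsPretransitive (dAut (cayAdj G S)) G where
  exists_smul_eq u v := ⟨⟨rightReg G (v⁻¹ * u), mulRight_mem_dAut S _⟩, by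
    change u * (v⁻¹ * u)⁻¹ = v
    group⟩

theorem cayleyRR_index_eq_card_stabilizer [Finite G] :
    (cayleyRR G S).index = Nat.card (MulAction.stabilizer (dAut (cayAdj G S)) (1 : G)) := by
  have := isPretransitive_dAut S
  have hrange : (rightReg G).range ≤ dAut (cayAdj G S) := by
    rintro _ ⟨g, rfl⟩
    exact mulRight_mem_dAut S g⁻¹
  have hinj : Function.Injective (rightReg G) := fun a b h => by
    simpa [rightReg_apply] using congrArg (· 1) h
  have hcard : Nat.card (cayleyRR G S) = Nat.card G :=
    (Nat.card_congr (Subgroup.subgroupOfEquivOfLe hrange).toEquiv).trans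
      (Nat.card_congr (MonoidHom.ofInjective hinj).toEquiv).symm
  have hR := (cayleyRR G S).card_mul_index
  have hstab := (MulAction.stabilizer (dAut (cayAdj G S)) (1 : G)).card_mul_index
  rw [MulAction.index_stabilizer_of_transitive, ← hR, hcard, mul_comm] at hstab
  exact Nat.eq_of_mul_eq_mul_left Nat.card_pos hstab.symm

end CayleyDigraph

section Transport

variable {G G' : Type*} [Group G] [Group G'] (e : G ≃* G') (S' : Set G')

theorem cayAdj_preimage (u v : G) :
    cayAdj G (e ⁻¹' S') u v ↔ cayAdj G' S' (e u) (e v) := by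
  simp [cayAdj]

theorem dAut_preimage :
    dAut (cayAdj G (e ⁻¹' S')) =
      (dAut (cayAdj G' S')).comap e.toEquiv.permCongrHom.toMonoidHom := by
  ext σ
  simp only [Subgroup.mem_comap, MulEquiv.coe_toMonoidHom]
  refine ⟨fun hσ u v => ?_, fun hσ u v => ?_⟩
  · simpa [cayAdj_preimage] using hσ (e.symm u) (e.symm v)
  · simpa [cayAdj_preimage] using hσ (e u) (e v)

theorem range_rightReg_eq_comap :
    (rightReg G).range = (rightReg G').range.comap e.toEquiv.permCongrHom.toMonoidHom := by
  have key (g : G) : e.toEquiv.permCongrHom (rightReg G g) = rightReg G' (e g) := by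
    ext v
    simp [rightReg_apply]
  ext σ
  simp only [MonoidHom.mem_range, Subgroup.mem_comap, MulEquiv.coe_toMonoidHom]
  refine ⟨fun ⟨g, hg⟩ => ⟨e g, by rw [← key, hg]⟩, fun ⟨g, hg⟩ => ⟨e.symm g, ?_⟩⟩
  apply e.toEquiv.permCongrHom.injective
  rw [key, e.apply_symm_apply, hg]

theorem cayleyRR_index_preimage : (cayleyRR G (e ⁻¹' S')).index = (cayleyRR G' S').index := by
  change Subgroup.relIndex _ _ = Subgroup.relIndex _ _
  rw [range_rightReg_eq_comap e, dAut_preimage, Subgroup.relIndex_comap,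
    Subgroup.map_comap_eq_self_of_surjective e.toEquiv.permCongrHom.surjective]

end Transport

theorem IsRegularSub.comap_permCongrHom {α β : Type*} (e : α ≃ β)
    {H : Subgroup (Equiv.Perm β)} (hH : IsRegularSub H) :
    IsRegularSub (H.comap e.permCongrHom.toMonoidHom) := by
  intro v w
  obtain ⟨⟨τ, hτ⟩, hτvw, huniq⟩ := hH (e v) (e w)
  have hmem : e.permCongrHom.symm τ ∈ H.comap e.permCongrHom.toMonoidHom := by
    simpa only [Subgroup.mem_comap, MulEquiv.coe_toMonoidHom, MulEquiv.apply_symm_apply]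
  refine ⟨⟨_, hmem⟩, e.injective ?_, fun ⟨σ, hσ⟩ hσvw => ?_⟩
  · simpa [Equiv.permCongrHom_symm] using hτvw
  · have := huniq ⟨e.permCongrHom σ, hσ⟩ (by simpa using hσvw)
    ext1
    exact (e.permCongrHom.symm_apply_eq.mpr (congrArg Subtype.val this).symm).symm

theorem Subgroup.comm_of_comap {A B : Type*} [Group A] [Group B] {f : A →* B}
    (hf : Function.Surjective f) {H : Subgroup B}
    (hcomm : ∀ a ∈ H.comap f, ∀ b ∈ H.comap f, a * b = b * a) :
    ∀ a ∈ H, ∀ b ∈ H, a * b = b * a := by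
  intro a ha b hb
  obtain ⟨a, rfl⟩ := hf a
  obtain ⟨b, rfl⟩ := hf b
  rw [← map_mul, hcomm a ha b hb, map_mul]

section TwistedTranslations

variable {G : Type*} [Group G] (χ : G →* MulAut G)

def twistedMul (g : G) : Equiv.Perm G := Equiv.mulRight g * MulAut.toPerm G (χ g)

theorem twistedMul_apply (g v : G) : twistedMul χ g v = χ g v * g := rfl

theorem twistedMul_apply_one (g : G) : twistedMul χ g 1 = g := by
  simp [twistedMul_apply]

theorem twistedMul_one : twistedMul χ 1 = 1 := by
  ext v
  simp [twistedMul_apply]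

variable {χ}

theorem twistedMul_mul (hχ : ∀ a b, χ (χ a b) = χ b) (hcomm : ∀ a b, Commute (χ a) (χ b))
    (a b : G) : twistedMul χ a * twistedMul χ b = twistedMul χ (χ a b * a) := by
  ext v
  simp only [Equiv.Perm.mul_apply, twistedMul_apply, map_mul, hχ, MulAut.mul_apply, mul_assoc]
  rw [← MulAut.mul_apply, (hcomm a b).eq, MulAut.mul_apply]

def twistedSubgroup (hχ : ∀ a b, χ (χ a b) = χ b) (hcomm : ∀ a b, Commute (χ a) (χ b)) :
    Subgroup (Equiv.Perm G) where
  carrier := Set.range (twistedMul χ)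
  one_mem' := ⟨1, twistedMul_one χ⟩
  mul_mem' := by
    rintro _ _ ⟨a, rfl⟩ ⟨b, rfl⟩
    exact ⟨_, (twistedMul_mul hχ hcomm a b).symm⟩
  inv_mem' := by
    rintro _ ⟨a, rfl⟩
    refine ⟨χ a⁻¹ a⁻¹, eq_inv_of_mul_eq_one_left ?_⟩
    rw [twistedMul_mul hχ hcomm, hχ, ← map_mul, mul_inv_cancel, map_one, twistedMul_one]

variable (hχ : ∀ a b, χ (χ a b) = χ b) (hcomm : ∀ a b, Commute (χ a) (χ b))

theorem isRegularSub_twistedSubgroup : IsRegularSub (twistedSubgroup hχ hcomm) := by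
  intro v w
  have hχ_apply (g : G) : χ (twistedMul χ g v) = χ v * χ g := by
    rw [twistedMul_apply, map_mul, hχ]
  have hinj (g g' : G) (h : twistedMul χ g v = twistedMul χ g' v) : g = g' := by
    have hχg : χ g = χ g' := mul_left_cancel ((hχ_apply g).symm.trans (h ▸ hχ_apply g'))
    rw [twistedMul_apply, twistedMul_apply, hχg] at h
    exact mul_left_cancel h
  have hexists : ∃ σ ∈ twistedSubgroup hχ hcomm, σ v = w :=
    ⟨twistedMul χ w * (twistedMul χ v)⁻¹,
      mul_mem ⟨w, rfl⟩ (inv_mem ⟨v, rfl⟩), by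
        rw [Equiv.Perm.mul_apply, Equiv.Perm.inv_eq_iff_eq.mpr (twistedMul_apply_one χ v).symm,
          twistedMul_apply_one]⟩
  obtain ⟨σ, hσ, hσvw⟩ := hexists
  refine ⟨⟨σ, hσ⟩, hσvw, fun ⟨τ, hτ⟩ hτvw => Subtype.ext ?_⟩
  obtain ⟨g, rfl⟩ := hσ
  obtain ⟨g', rfl⟩ := hτ
  exact congrArg (twistedMul χ) (hinj g' g (hτvw.trans hσvw.symm))

theorem twistedSubgroup_le_dAut (S : Set G)
    (hS : ∀ g, MulAut.toPerm G (χ g) ∈ dAut (cayAdj G S)) :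
    twistedSubgroup hχ hcomm ≤ dAut (cayAdj G S) := by
  rintro _ ⟨g, rfl⟩
  exact mul_mem (mulRight_mem_dAut S g) (hS g)

theorem twistedSubgroup_not_comm {a b : G} (hab : χ a b * a ≠ χ b a * b) :
    ¬ ∀ σ ∈ twistedSubgroup hχ hcomm, ∀ τ ∈ twistedSubgroup hχ hcomm, σ * τ = τ * σ := by
  intro h
  apply hab
  have := congrArg (· 1) (h _ ⟨a, rfl⟩ _ ⟨b, rfl⟩)
  simpa only [twistedMul_mul hχ hcomm, twistedMul_apply_one] using this

end TwistedTranslations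

def zmodPowersHom {M : Type*} [Monoid M] {n : ℕ} [NeZero n] (a : M) (ha : a ^ n = 1) :
    Multiplicative (ZMod n) →* M where
  toFun k := a ^ k.toAdd.val
  map_one' := by simp
  map_mul' k l := by
    rw [toAdd_mul, ZMod.val_add, ← pow_eq_pow_mod _ ha, pow_add]

theorem zmodPowersHom_apply {M : Type*} [Monoid M] {n : ℕ} [NeZero n] (a : M) (ha : a ^ n = 1)
    (k : Multiplicative (ZMod n)) : zmodPowersHom a ha k = a ^ k.toAdd.val := rfl

theorem ZMod.eq_add_apply_zero {n : ℕ} [NeZero n] {f : ZMod n → ZMod n}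
    (hf : ∀ i, f (i + 1) = f i + 1) (i : ZMod n) : f i = i + f 0 := by
  suffices h : ∀ t : ℕ, f t = t + f 0 by simpa using h i.val
  intro t
  induction t with
  | zero => simp
  | succ t ih => rw [Nat.cast_succ, hf, ih]; ring

theorem ZMod.two_ne_zero_of_odd {n : ℕ} [Fact (1 < n)] (hn : Odd n) : (2 : ZMod n) ≠ 0 := by
  intro h
  have hdvd : n ∣ 2 := (ZMod.natCast_eq_zero_iff 2 n).mp (by exact_mod_cast h)
  have h1 : 1 < n := Fact.out
  have : n = 2 := by have := Nat.le_of_dvd two_pos hdvd; omega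
  subst this
  exact Nat.not_odd_iff_even.mpr even_two hn

namespace IndexPCayley

open Multiplicative

variable (p m : ℕ)

abbrev V := Multiplicative (ZMod (p ^ (m + 2))) × Multiplicative (ZMod p)

def mk (a : ZMod (p ^ (m + 2))) (b : ZMod p) : V p m := (ofAdd a, ofAdd b)

def modP : ZMod (p ^ (m + 2)) →+* ZMod p := ZMod.castHom (dvd_pow_self p (by omega)) _

/-- `b ↦ p ^ (m + 1) * b`, well defined on `ℤ/p`. -/
def socle : ZMod p →+ ZMod (p ^ (m + 2)) :=
  ZMod.lift p ⟨zmultiplesHom _ ((p : ZMod (p ^ (m + 2))) ^ (m + 1)), by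
    rw [zmultiplesHom_apply, natCast_zsmul, nsmul_eq_mul, ← pow_succ', ← Nat.cast_pow,
      ZMod.natCast_self]⟩

variable {p m}

theorem socle_apply [NeZero p] (b : ZMod p) :
    socle p m b = (b.val : ZMod (p ^ (m + 2))) * p ^ (m + 1) := by
  conv_lhs => rw [← ZMod.natCast_zmod_val b, ← nsmul_one, map_nsmul]
  rw [← Int.cast_one, socle, ZMod.lift_coe]
  simp [nsmul_eq_mul]

theorem modP_socle [NeZero p] (b : ZMod p) : modP p m (socle p m b) = 0 := by
  simp [socle_apply, modP]

theorem socle_injective [NeZero p] : Function.Injective (socle p m) := by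
  rw [injective_iff_map_eq_zero]
  intro b hb
  rw [socle_apply, ← Nat.cast_pow, ← Nat.cast_mul, ZMod.natCast_eq_zero_iff, pow_succ p (m + 1),
    mul_comm b.val] at hb
  have hp : 0 < p ^ (m + 1) := pow_pos (Nat.pos_of_ne_zero (NeZero.ne p)) _
  have := Nat.eq_zero_of_dvd_of_lt (Nat.dvd_of_mul_dvd_mul_left hp hb) (ZMod.val_lt b)
  exact (ZMod.val_eq_zero b).mp this

variable [Fact p.Prime]

variable (p m) in
def alphaHom : V p m →* V p m where
  toFun g := mk p m (g.1.toAdd + socle p m g.2.toAdd) (modP p m g.1.toAdd + g.2.toAdd)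
  map_one' := by simp [mk]
  map_mul' g h := by
    simp only [mk, Prod.fst_mul, Prod.snd_mul, toAdd_mul, map_add, Prod.mk_mul_mk, ← ofAdd_add]
    congr 2 <;> abel

theorem alphaHom_injective : Function.Injective (alphaHom p m) := by
  rw [injective_iff_map_eq_one]
  rintro ⟨a, b⟩ h
  simp only [alphaHom, mk, MonoidHom.coe_mk, OneHom.coe_mk, Prod.mk_eq_one, ofAdd_eq_one] at h
  obtain ⟨ha, hb⟩ := h
  have hmod : modP p m a.toAdd = 0 := by simpa [modP_socle] using congrArg (modP p m) ha
  rw [hmod, zero_add] at hb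
  rw [hb, map_zero, add_zero] at ha
  exact Prod.ext (toAdd_eq_zero.mp ha) (toAdd_eq_zero.mp hb)

variable (p m) in
/-- The automorphism `(x, y) ↦ (x y, x₀ y)` of the paper, with `x = mk 1 0`, `y = mk 0 1`
and `x₀ = x ^ p ^ (m + 1)`. -/
noncomputable def alpha : MulAut (V p m) :=
  MulEquiv.ofBijective (alphaHom p m) alphaHom_injective.bijective_of_finite

theorem alpha_mk (a : ZMod (p ^ (m + 2))) (b : ZMod p) :
    alpha p m (mk p m a b) = mk p m (a + socle p m b) (modP p m a + b) := rfl

def choose2 (i : ZMod p) : ZMod p := i * (i - 1) / 2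

theorem choose2_succ (hodd : Odd p) (i : ZMod p) : choose2 (i + 1) = choose2 i + i := by
  have := ZMod.two_ne_zero_of_odd hodd
  unfold choose2
  field_simp
  ring

variable (p m)

/-- The `α`-orbit of `x`: `xOrb i = α ^ i x`. -/
def xOrb (i : ZMod p) : V p m := mk p m (1 + socle p m (choose2 i)) i

/-- The `α`-orbit of `y`: `yOrb b = α ^ b y`. -/
def yOrb (b : ZMod p) : V p m := mk p m (socle p m b) 1

def connSet : Set (V p m) := Set.range (xOrb p m) ∪ Set.range (yOrb p m)

def fstModP : V p m →* Multiplicative (ZMod p) :=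
  (AddMonoidHom.toMultiplicative (modP p m).toAddMonoidHom).comp (MonoidHom.fst _ _)

variable {p m}

@[simp] theorem fstModP_xOrb (i : ZMod p) : fstModP p m (xOrb p m i) = ofAdd 1 := by
  simp [fstModP, xOrb, mk, modP_socle]

@[simp] theorem fstModP_yOrb (b : ZMod p) : fstModP p m (yOrb p m b) = 1 := by
  simp [fstModP, yOrb, mk, modP_socle]

@[simp] theorem snd_xOrb (i : ZMod p) : (xOrb p m i).2 = ofAdd i := rfl

@[simp] theorem snd_yOrb (b : ZMod p) : (yOrb p m b).2 = ofAdd 1 := rfl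

theorem fstModP_alpha (g : V p m) : fstModP p m (alpha p m g) = fstModP p m g := by
  simp [fstModP, alpha, alphaHom, mk, modP_socle]

theorem alpha_xOrb (hodd : Odd p) (i : ZMod p) : alpha p m (xOrb p m i) = xOrb p m (i + 1) := by
  simp only [xOrb, alpha_mk, choose2_succ hodd, map_add, modP_socle, map_one]
  congr 1 <;> abel

theorem alpha_yOrb (b : ZMod p) : alpha p m (yOrb p m b) = yOrb p m (b + 1) := by
  simp only [yOrb, alpha_mk, map_add, modP_socle, zero_add]

theorem xOrb_succ (hodd : Odd p) (i : ZMod p) : xOrb p m (i + 1) = xOrb p m i * yOrb p m i := by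
  simp only [xOrb, yOrb, mk, choose2_succ hodd, map_add, Prod.mk_mul_mk, ← ofAdd_add]
  congr 2
  abel

theorem xOrb_injective : Function.Injective (xOrb p m) := fun i j h => by
  simpa using congrArg Prod.snd h

theorem yOrb_injective : Function.Injective (yOrb p m) := fun b b' h =>
  socle_injective (by simpa [yOrb, mk] using congrArg Prod.fst h)

theorem xOrb_ne_yOrb (i b : ZMod p) : xOrb p m i ≠ yOrb p m b := fun h => by
  simpa using congrArg (fstModP p m) h

theorem fstModP_alpha_pow (n : ℕ) (g : V p m) :
    fstModP p m ((alpha p m ^ n) g) = fstModP p m g := by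
  induction n with
  | zero => rfl
  | succ n ih => rw [pow_succ' (alpha p m) n, MulAut.mul_apply, fstModP_alpha, ih]

theorem alpha_pow_xOrb (hodd : Odd p) (k : ℕ) (i : ZMod p) :
    (alpha p m ^ k) (xOrb p m i) = xOrb p m (i + k) := by
  induction k with
  | zero => simp
  | succ k ih =>
    rw [pow_succ' (alpha p m) k, MulAut.mul_apply, ih, alpha_xOrb hodd, Nat.cast_succ, add_assoc]

theorem alpha_pow_yOrb (k : ℕ) (b : ZMod p) :
    (alpha p m ^ k) (yOrb p m b) = yOrb p m (b + k) := by
  induction k with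
  | zero => simp
  | succ k ih =>
    rw [pow_succ' (alpha p m) k, MulAut.mul_apply, ih, alpha_yOrb, Nat.cast_succ, add_assoc]

theorem closure_connSet : Submonoid.closure (connSet p m) = ⊤ := by
  refine eq_top_iff.mpr fun g _ => ?_
  have hx : xOrb p m 0 = mk p m 1 0 := by simp [xOrb, choose2]
  have hy : yOrb p m 0 = mk p m 0 1 := by simp [yOrb]
  have hg : g = xOrb p m 0 ^ g.1.toAdd.val * yOrb p m 0 ^ g.2.toAdd.val := by
    simp [hx, hy, mk, ← ofAdd_nsmul]
  rw [hg]
  have hx_mem : xOrb p m 0 ∈ connSet p m := Or.inl ⟨0, rfl⟩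
  have hy_mem : yOrb p m 0 ∈ connSet p m := Or.inr ⟨0, rfl⟩
  exact mul_mem (pow_mem (Submonoid.subset_closure hx_mem) _)
    (pow_mem (Submonoid.subset_closure hy_mem) _)

theorem alpha_pow_p (hodd : Odd p) : alpha p m ^ p = 1 := by
  apply MulEquiv.toMonoidHom_injective
  refine MonoidHom.eq_of_eqOn_denseM closure_connSet ?_
  rintro _ (⟨i, rfl⟩ | ⟨b, rfl⟩)
  · simp [alpha_pow_xOrb hodd]
  · simp [alpha_pow_yOrb]

variable (p m) in
noncomputable def alphaPow (hodd : Odd p) : Multiplicative (ZMod p) →* MulAut (V p m) :=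
  zmodPowersHom (alpha p m) (alpha_pow_p hodd)

theorem alphaPow_xOrb (hodd : Odd p) (k : Multiplicative (ZMod p)) (i : ZMod p) :
    alphaPow p m hodd k (xOrb p m i) = xOrb p m (i + k.toAdd) := by
  simp [alphaPow, zmodPowersHom_apply, alpha_pow_xOrb hodd]

theorem alphaPow_yOrb (hodd : Odd p) (k : Multiplicative (ZMod p)) (b : ZMod p) :
    alphaPow p m hodd k (yOrb p m b) = yOrb p m (b + k.toAdd) := by
  simp [alphaPow, zmodPowersHom_apply, alpha_pow_yOrb]

theorem alpha_mem_connSet_iff (hodd : Odd p) (g : V p m) :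
    alpha p m g ∈ connSet p m ↔ g ∈ connSet p m := by
  have hx (i : ZMod p) : alpha p m (xOrb p m (i - 1)) = xOrb p m i := by
    rw [alpha_xOrb hodd, sub_add_cancel]
  have hy (b : ZMod p) : alpha p m (yOrb p m (b - 1)) = yOrb p m b := by
    rw [alpha_yOrb, sub_add_cancel]
  constructor
  · rintro (⟨i, hi⟩ | ⟨b, hb⟩)
    · exact Or.inl ⟨i - 1, (alpha p m).injective (by rw [hx, hi])⟩
    · exact Or.inr ⟨b - 1, (alpha p m).injective (by rw [hy, hb])⟩
  · rintro (⟨i, rfl⟩ | ⟨b, rfl⟩)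
    · exact Or.inl ⟨i + 1, (alpha_xOrb hodd i).symm⟩
    · exact Or.inr ⟨b + 1, (alpha_yOrb b).symm⟩

theorem alphaPow_mem_dAut (hodd : Odd p) (k : Multiplicative (ZMod p)) :
    MulAut.toPerm _ (alphaPow p m hodd k) ∈ dAut (cayAdj (V p m) (connSet p m)) := by
  rw [alphaPow, zmodPowersHom_apply, map_pow]
  exact pow_mem (toPerm_mem_dAut _ (alpha_mem_connSet_iff hodd)) _

theorem notMem_connSet_of_fstModP (hodd : Odd p) {g : V p m}
    (hg : (fstModP p m g).toAdd = -1) : g ∉ connSet p m := by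
  have h2 := ZMod.two_ne_zero_of_odd hodd
  rintro (⟨i, rfl⟩ | ⟨b, rfl⟩)
  · refine h2 ?_
    simp only [fstModP_xOrb, toAdd_ofAdd] at hg
    linear_combination hg
  · simp at hg

section CayleyDigraph

local notation "Adj" => cayAdj (V p m) (connSet p m)

theorem cayAdj_xOrb_xOrb (hodd : Odd p) (i j : ZMod p) :
    Adj (xOrb p m i) (xOrb p m j) ↔ j = i + 1 := by
  constructor
  · rintro (⟨c, hc⟩ | ⟨c, hc⟩)
    · simpa using congrArg (fstModP p m) hc
    · have : (1 : ZMod p) = j + -i := by simpa using congrArg (toAdd ·.2) hc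
      linear_combination -this
  · rintro rfl
    exact Or.inr ⟨i, by rw [xOrb_succ hodd, mul_comm (xOrb p m i), mul_inv_cancel_right]⟩

theorem not_cayAdj_xOrb_yOrb (hodd : Odd p) (i b : ZMod p) : ¬ Adj (xOrb p m i) (yOrb p m b) :=
  notMem_connSet_of_fstModP hodd (by simp)

theorem not_cayAdj_yOrb_yOrb (b b' : ZMod p) : ¬ Adj (yOrb p m b) (yOrb p m b') := by
  rintro (⟨c, hc⟩ | ⟨c, hc⟩)
  · simpa using congrArg (toAdd <| fstModP p m ·) hc
  · simpa using congrArg (toAdd ·.2) hc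

theorem cayAdj_yOrb_xOrb (hodd : Odd p) (b j : ZMod p) :
    Adj (yOrb p m b) (xOrb p m j) ↔ j = b + 1 := by
  constructor
  · rintro (⟨c, hc⟩ | ⟨c, hc⟩)
    · have hcj : c = j + -1 := by simpa using congrArg (toAdd ·.2) hc
      have hj : j = c + 1 := by rw [hcj, neg_add_cancel_right]
      have h := mul_inv_eq_iff_eq_mul.mp hc.symm
      rw [hj, xOrb_succ hodd] at h
      rw [hj, yOrb_injective (mul_left_cancel h)]
    · simpa using congrArg (toAdd <| fstModP p m ·) hc
  · rintro rfl
    exact Or.inl ⟨b, by rw [xOrb_succ hodd, mul_inv_cancel_right]⟩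

theorem one_notMem_connSet : (1 : V p m) ∉ connSet p m := by
  rintro (⟨i, hi⟩ | ⟨b, hb⟩)
  · simpa using congrArg (toAdd <| fstModP p m ·) hi
  · simpa using congrArg (toAdd ·.2) hb

theorem cayAdj_one_xOrb (i : ZMod p) : Adj 1 (xOrb p m i) :=
  (cayAdj_one_left _ _).mpr (Or.inl ⟨i, rfl⟩)

theorem not_cayAdj_xOrb_one (hodd : Odd p) (i : ZMod p) :
    ¬ Adj (xOrb p m i) 1 :=
  notMem_connSet_of_fstModP hodd (by simp)

variable {σ : Equiv.Perm (V p m)}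

theorem exists_xOrb_of_mem_dAut (hodd : Odd p) (hσ : σ ∈ dAut Adj) (h1 : σ 1 = 1)
    (i : ZMod p) :
    ∃ j, σ (xOrb p m i) = xOrb p m j := by
  rcases apply_mem_of_mem_dAut _ hσ h1 (Or.inl ⟨i, rfl⟩) with ⟨j, hj⟩ | ⟨b, hb⟩
  · exact ⟨j, hj.symm⟩
  · have hadj : Adj (σ (xOrb p m (i - 1))) (σ (xOrb p m i)) :=
      (hσ _ _).mpr ((cayAdj_xOrb_xOrb hodd _ _).mpr (sub_add_cancel i 1).symm)
    rw [← hb] at hadj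
    rcases apply_mem_of_mem_dAut _ hσ h1 (Or.inl ⟨i - 1, rfl⟩) with ⟨c, hc⟩ | ⟨c, hc⟩ <;>
      rw [← hc] at hadj
    · exact (not_cayAdj_xOrb_yOrb hodd _ _ hadj).elim
    · exact (not_cayAdj_yOrb_yOrb _ _ hadj).elim

theorem exists_shift_of_mem_dAut (hodd : Odd p) (hσ : σ ∈ dAut Adj) (h1 : σ 1 = 1) :
    ∃ k : ZMod p, (∀ i, σ (xOrb p m i) = xOrb p m (i + k)) ∧
      ∀ b, σ (yOrb p m b) = yOrb p m (b + k) := by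
  choose f hf using exists_xOrb_of_mem_dAut hodd hσ h1
  have hf_succ (i : ZMod p) : f (i + 1) = f i + 1 := by
    have := (hσ (xOrb p m i) (xOrb p m (i + 1))).mpr ((cayAdj_xOrb_xOrb hodd _ _).mpr rfl)
    rwa [hf, hf, cayAdj_xOrb_xOrb hodd] at this
  have hshift := ZMod.eq_add_apply_zero hf_succ
  refine ⟨f 0, fun i => by rw [hf, hshift], fun b => ?_⟩
  rcases apply_mem_of_mem_dAut _ hσ h1 (Or.inr ⟨b, rfl⟩) with ⟨j, hj⟩ | ⟨c, hc⟩
  · have : σ (xOrb p m (j - f 0)) = σ (yOrb p m b) := by rw [hf, hshift, sub_add_cancel, hj]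
    exact (xOrb_ne_yOrb _ _ (σ.injective this)).elim
  · have := (hσ (yOrb p m b) (xOrb p m (b + 1))).mpr ((cayAdj_yOrb_xOrb hodd _ _).mpr rfl)
    rw [← hc, hf, hshift, cayAdj_yOrb_xOrb hodd] at this
    rw [← hc]
    congr 1
    linear_combination -this

theorem exists_shift_of_mem_dAut_of_apply_eq (hodd : Odd p) (hσ : σ ∈ dAut Adj) {u : V p m}
    (hu : σ u = u) : ∃ k : ZMod p, (∀ i, σ (xOrb p m i * u) = xOrb p m (i + k) * u) ∧
      ∀ b, σ (yOrb p m b * u) = yOrb p m (b + k) * u := by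
  have hconj : Equiv.mulRight u⁻¹ * σ * Equiv.mulRight u ∈ dAut Adj :=
    mul_mem (mul_mem (mulRight_mem_dAut _ _) hσ) (mulRight_mem_dAut _ _)
  obtain ⟨k, hx, hy⟩ := exists_shift_of_mem_dAut hodd hconj (by simp [hu])
  refine ⟨k, fun i => ?_, fun b => ?_⟩
  · simpa [mul_inv_eq_iff_eq_mul] using hx i
  · simpa [mul_inv_eq_iff_eq_mul] using hy b

theorem eq_one_of_mem_dAut (hodd : Odd p) (hσ : σ ∈ dAut Adj) (h1 : σ 1 = 1)
    (hS : ∀ s ∈ connSet p m, σ s = s) : σ = 1 := by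
  suffices h : ∀ w, σ w = w ∧ ∀ s ∈ connSet p m, σ (s * w) = s * w from
    Equiv.ext fun w => (h w).1
  intro w
  have hw : w ∈ Submonoid.closure (connSet p m) :=
    closure_connSet (p := p) (m := m) ▸ Submonoid.mem_top w
  induction hw using Submonoid.closure_induction_left with
  | one => exact ⟨h1, fun s hs => by rw [mul_one, hS s hs]⟩
  | mul_left s hs w _ ih =>
    have hsw := ih.2
    obtain ⟨k, hx, hy⟩ := exists_shift_of_mem_dAut_of_apply_eq hodd hσ (hsw s hs)
    -- the shift at `s * w` is read off the vertex `xOrb (i + 1) * w`, which is already fixed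
    have hk : k = 0 := by
      rcases hs with ⟨i, rfl⟩ | ⟨b, rfl⟩
      · have e : yOrb p m i * (xOrb p m i * w) = xOrb p m (i + 1) * w := by
          rw [xOrb_succ hodd, mul_left_comm, mul_assoc]
        have h := hy i
        rw [e, hsw _ (Or.inl ⟨_, rfl⟩), ← e] at h
        simpa using yOrb_injective (mul_right_cancel h)
      · have e : xOrb p m b * (yOrb p m b * w) = xOrb p m (b + 1) * w := by
          rw [xOrb_succ hodd, mul_assoc]
        have h := hx b
        rw [e, hsw _ (Or.inl ⟨_, rfl⟩), ← e] at h
        simpa using xOrb_injective (mul_right_cancel h)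
    subst hk
    refine ⟨hsw s hs, ?_⟩
    rintro _ (⟨i, rfl⟩ | ⟨b, rfl⟩)
    · simpa using hx i
    · simpa using hy b

theorem exists_eq_alphaPow (hodd : Odd p) (hσ : σ ∈ dAut Adj) (h1 : σ 1 = 1) :
    ∃ k, σ = MulAut.toPerm _ (alphaPow p m hodd k) := by
  obtain ⟨k, hx, hy⟩ := exists_shift_of_mem_dAut hodd hσ h1
  refine ⟨ofAdd k, (inv_mul_eq_one.mp (eq_one_of_mem_dAut hodd
    (mul_mem (inv_mem (alphaPow_mem_dAut hodd _)) hσ) ?_ ?_)).symm⟩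
  · rw [Equiv.Perm.mul_apply, h1, Equiv.Perm.inv_eq_iff_eq]
    exact (map_one (alphaPow p m hodd (ofAdd k))).symm
  · rintro _ (⟨i, rfl⟩ | ⟨b, rfl⟩)
    · rw [Equiv.Perm.mul_apply, Equiv.Perm.inv_eq_iff_eq, hx]
      exact (alphaPow_xOrb hodd _ _).symm
    · rw [Equiv.Perm.mul_apply, Equiv.Perm.inv_eq_iff_eq, hy]
      exact (alphaPow_yOrb hodd _ _).symm

theorem card_stabilizer_dAut (hodd : Odd p) :
    Nat.card (MulAction.stabilizer (dAut Adj) (1 : V p m)) = p := by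
  let f (k : Multiplicative (ZMod p)) : MulAction.stabilizer (dAut Adj) (1 : V p m) :=
    ⟨⟨_, alphaPow_mem_dAut hodd k⟩, map_one (alphaPow p m hodd k)⟩
  have hf : Function.Bijective f := by
    refine ⟨fun k l h => ?_, fun ⟨⟨σ, hσ⟩, hσ1⟩ => ?_⟩
    · have h0 : xOrb p m (0 + k.toAdd) = xOrb p m (0 + l.toAdd) := by
        simpa only [f, MulAut.toPerm_apply, alphaPow_xOrb] using
          congrArg (fun τ : MulAction.stabilizer (dAut Adj) (1 : V p m) =>
            (τ : Equiv.Perm (V p m)) (xOrb p m 0)) h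
      simpa using xOrb_injective h0
    · obtain ⟨k, rfl⟩ := exists_eq_alphaPow hodd hσ hσ1
      exact ⟨k, rfl⟩
  rw [← Nat.card_eq_of_bijective f hf, Nat.card_congr toAdd, Nat.card_zmod]

theorem cayleyRR_index (hodd : Odd p) : (cayleyRR (V p m) (connSet p m)).index = p :=
  (cayleyRR_index_eq_card_stabilizer _).trans (card_stabilizer_dAut hodd)

section RegularSubgroup

variable (hodd : Odd p)

/-- `v ↦ α ^ (fstModP g) v * g`: the graph of `fstModP` inside `V ⋊ ⟨α⟩`. -/
noncomputable def regularSubgroup : Subgroup (Equiv.Perm (V p m)) :=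
  twistedSubgroup (χ := (alphaPow p m hodd).comp (fstModP p m))
    (fun a b => by simp [alphaPow, zmodPowersHom_apply, fstModP_alpha_pow])
    (fun a b => (Commute.all _ _).map (alphaPow p m hodd))

theorem regularSubgroup_le_dAut : regularSubgroup hodd ≤ dAut Adj :=
  twistedSubgroup_le_dAut _ _ _ fun _ => alphaPow_mem_dAut hodd _

theorem isRegularSub_regularSubgroup : IsRegularSub (regularSubgroup (m := m) hodd) :=
  isRegularSub_twistedSubgroup _ _

theorem regularSubgroup_not_comm :
    ¬ ∀ σ ∈ regularSubgroup (m := m) hodd, ∀ τ ∈ regularSubgroup hodd, σ * τ = τ * σ := by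
  refine twistedSubgroup_not_comm _ _ (a := xOrb p m 0) (b := yOrb p m 0) fun h => ?_
  simp only [MonoidHom.coe_comp, Function.comp_apply, fstModP_xOrb, fstModP_yOrb, map_one,
    alphaPow_yOrb, MulAut.one_apply, toAdd_ofAdd, mul_comm (xOrb p m 0)] at h
  simpa using yOrb_injective (mul_right_cancel h)

end RegularSubgroup

end CayleyDigraph

end IndexPCayley

open IndexPCayley in
theorem stmt_12_general {G : Type*} [CommGroup G] (p n : ℕ) (hp : p.Prime)
    (hodd : Odd p) (hn : 2 ≤ n)
    (hiso : Nonempty (G ≃* (Multiplicative (ZMod (p ^ n)) × Multiplicative (ZMod p)))) :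
    ∃ S : Set G, (1 : G) ∉ S ∧
      (∃ u v : G, cayAdj G S u v ∧ ¬ cayAdj G S v u) ∧
      (cayleyRR G S).index = p ∧
      ∃ H : Subgroup (Equiv.Perm G), H ≤ dAut (cayAdj G S) ∧ IsRegularSub H ∧
        ¬ ∀ a ∈ H, ∀ b ∈ H, a * b = b * a := by
  obtain ⟨m, rfl⟩ : ∃ m, n = m + 2 := ⟨n - 2, by omega⟩
  have : Fact p.Prime := ⟨hp⟩
  obtain ⟨e⟩ := hiso
  let Ψ := e.toEquiv.permCongrHom.toMonoidHom
  refine ⟨e ⁻¹' connSet p m, by simpa using one_notMem_connSet,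
    ⟨e.symm 1, e.symm (xOrb p m 0), ?_⟩, ?_, (regularSubgroup hodd).comap Ψ, ?_,
    (isRegularSub_regularSubgroup hodd).comap_permCongrHom e.toEquiv, ?_⟩
  · simp only [cayAdj_preimage, MulEquiv.apply_symm_apply]
    exact ⟨cayAdj_one_xOrb 0, not_cayAdj_xOrb_one hodd 0⟩
  · rw [cayleyRR_index_preimage, cayleyRR_index hodd]
  · rw [dAut_preimage]
    exact Subgroup.comap_mono (regularSubgroup_le_dAut hodd)
  · exact fun h => regularSubgroup_not_comm hodd
      (Subgroup.comm_of_comap e.toEquiv.permCongrHom.surjective h)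

/-- For `G ≅ Z_{p^n} × Z_p` (`p` an odd prime, `n ≥ 2`) there is a proper Cayley
digraph on `G` with Cayley index exactly `p` whose automorphism group contains a
nonabelian regular subgroup. -/
theorem stmt_12 {G : Type*} [CommGroup G] [Fintype G] (p n : ℕ) (hp : p.Prime)
    (hodd : Odd p) (hn : 2 ≤ n)
    (hiso : Nonempty (G ≃* (Multiplicative (ZMod (p ^ n)) × Multiplicative (ZMod p)))) :
    ∃ S : Set G, (1 : G) ∉ S ∧
      (∃ u v : G, cayAdj G S u v ∧ ¬ cayAdj G S v u) ∧
      (cayleyRR G S).index = p ∧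
      ∃ H : Subgroup (Equiv.Perm G), H ≤ dAut (cayAdj G S) ∧ IsRegularSub H ∧
        ¬ ∀ a ∈ H, ∀ b ∈ H, a * b = b * a :=
  stmt_12_general p n hp hodd hn hiso
end

section
/- Let p be an odd prime, n ≥ m ≥ 2, G = ⟨x⟩ × ⟨y⟩ ≅ Z_{p^n} × Z_{p^m}, x₀ = x^{p^{n-1}}, y₀ = y^{p^{m-1}}, and α the automorphism of G sending x ↦ x·y₀ and y ↦ y·x₀. Then α fixes both x₀ and y₀, x^{α^i} = x·y₀^i and y^{α^i} = y·x₀^i for all i, α has order p, and the set S = {x^{α^i}, y^{α^i}, (xy⁻¹)^{α^i} : i ∈ ℤ} has cardinality 3p. -/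
/-!
Since `y₀` has order `p` and is fixed by `α`, `(α ^ i) x = x * y₀ ^ i`, and similarly for `y` and
`x * y⁻¹`; so the three `⟨α⟩`-orbits making up the set are the cosets `x⟨y₀⟩`, `y⟨x₀⟩` and
`xy⁻¹⟨y₀x₀⁻¹⟩`, each of size `p`. They lie in the cosets of `G ^ p` through `x`, `y` and `xy⁻¹`,
which are distinct: `x, y` is a basis of `G ≅ ℤ/p^n × ℤ/p^m` (count `|G|`), so a `p`-th power
`x ^ a * y ^ b` has `p ∣ a` and `p ∣ b`, and none of `x⁻¹y`, `y⁻¹`, `xy⁻²` is one.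
-/

open Subgroup

namespace MulEquiv

theorem zpow_apply_eq_mul_zpow {G : Type*} [Group G] (α : G ≃* G) {a c : G}
    (hc : α c = c) (ha : α a = a * c) (i : ℤ) : (α ^ i) a = a * c ^ i := by
  induction i using Int.induction_on generalizing a c with
  | zero => simp
  | succ k ih =>
    have hck : (α ^ (k : ℤ)) c = c := by
      simpa using ih (a := c) (c := 1) (map_one α) (by simpa)
    rw [zpow_add_one, MulAut.mul_apply, ha, map_mul, ih hc ha, hck, zpow_add_one, mul_assoc]
  | pred k ih =>
    have hck : (α ^ (-k : ℤ)) c = c := by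
      simpa using ih (a := c) (c := 1) (map_one α) (by simpa)
    have hinv : α⁻¹ a = a * c⁻¹ := by
      rw [MulAut.inv_apply, symm_apply_eq, map_mul, ha, map_inv, hc, mul_inv_cancel_right]
    rw [zpow_sub_one, MulAut.mul_apply, hinv, map_mul, ih hc ha, map_inv, hck, zpow_sub_one,
      mul_assoc]

theorem apply_pow_eq_self {G : Type*} [CommGroup G] (α : G ≃* G) {a c : G} {k : ℕ}
    (ha : α a = a * c) (hc : orderOf c ∣ k) : α (a ^ k) = a ^ k := by
  rw [map_pow, ha, mul_pow, orderOf_dvd_iff_pow_eq_one.mp hc, mul_one]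

theorem orderOf_eq_of_apply_eq_mul {G : Type*} [Group G] {p : ℕ} [Fact p.Prime] {x y c d : G}
    (hgen : closure {x, y} = ⊤) (α : G ≃* G) (hc : α c = c) (hd : α d = d)
    (hx : α x = x * c) (hy : α y = y * d) (hcp : orderOf c = p) (hdp : d ^ p = 1) :
    orderOf α = p := by
  refine orderOf_eq_prime ?_ fun h => (Fact.out : p.Prime).one_lt.ne' ?_
  · refine toMonoidHom_injective (MonoidHom.eq_of_eqOn_dense hgen ?_)
    rintro g (rfl | rfl)
    · simpa [hcp ▸ pow_orderOf_eq_one c] using α.zpow_apply_eq_mul_zpow hc hx p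
    · simpa [hdp] using α.zpow_apply_eq_mul_zpow hd hy p
  · rw [← hcp, orderOf_eq_one_iff]
    simpa [h] using hx.symm

theorem setOf_zpow_apply_eq_union {G : Type*} [CommGroup G] (α : G ≃* G) {x y c d : G}
    (hc : α c = c) (hd : α d = d) (hx : α x = x * c) (hy : α y = y * d) :
    {g : G | ∃ i : ℤ, g = (α ^ i) x ∨ g = (α ^ i) y ∨ g = (α ^ i) (x * y⁻¹)} =
      (Set.range fun i : ℤ => x * c ^ i) ∪ (Set.range fun i : ℤ => y * d ^ i) ∪
        (Set.range fun i : ℤ => x * y⁻¹ * (c * d⁻¹) ^ i) := by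
  have hxy := α.zpow_apply_eq_mul_zpow (c := c * d⁻¹) (by simp [hc, hd])
    (a := x * y⁻¹) (by simp only [map_mul, map_inv, hx, hy, mul_inv]; ac_rfl)
  ext g
  simp only [α.zpow_apply_eq_mul_zpow hc hx, α.zpow_apply_eq_mul_zpow hd hy, hxy,
    Set.mem_ofPred_eq, Set.mem_union, Set.mem_range, exists_or, eq_comm (a := g), or_assoc]

end MulEquiv

theorem orderOf_pow_prime_pow_pred {G : Type*} [Monoid G] {y : G} {p m : ℕ} (hp : p.Prime)
    (hm : 1 ≤ m) (hy : orderOf y = p ^ m) : orderOf (y ^ p ^ (m - 1)) = p := by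
  obtain ⟨k, rfl⟩ : ∃ k, m = k + 1 := ⟨m - 1, by omega⟩
  have := orderOf_pow_orderOf_div (x := y) (n := p) (by simp [hy, hp.ne_zero])
    (hy ▸ dvd_pow_self p k.succ_ne_zero)
  rwa [hy, pow_succ, Nat.mul_div_cancel _ hp.pos] at this

theorem orderOf_mul_inv_eq_prime {G : Type*} [CommGroup G] {p : ℕ} [Fact p.Prime]
    {H K : Subgroup G} (hHK : Disjoint H K) {u v : G} (hu : u ∈ H) (hv : v ∈ K)
    (hup : orderOf u = p) (hvp : orderOf v = p) : orderOf (v * u⁻¹) = p := by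
  refine orderOf_eq_prime ?_ ?_
  · rw [mul_pow, inv_pow, ← hvp, pow_orderOf_eq_one, hvp, ← hup, pow_orderOf_eq_one, inv_one,
      mul_one]
  · rw [Ne, mul_inv_eq_one]
    rintro rfl
    have hv1 : v = 1 := disjoint_def.mp hHK hu hv
    exact (Fact.out : p.Prime).one_lt.ne' (by rw [← hvp, hv1, orderOf_one])

theorem disjoint_zpowers_of_card_eq {G : Type*} [CommGroup G] [Finite G] {x y : G}
    (hgen : closure {x, y} = ⊤) (hcard : Nat.card G = orderOf x * orderOf y) :
    Disjoint (zpowers x) (zpowers y) := by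
  set φ := (zpowers x).subtype.coprod (zpowers y).subtype
  have hsurj : Function.Surjective φ := by
    rw [← MonoidHom.range_eq_top, eq_top_iff, ← hgen, closure_le]
    rintro g (rfl | rfl)
    · exact ⟨(⟨g, mem_zpowers g⟩, 1), by simp [φ]⟩
    · exact ⟨(1, ⟨g, mem_zpowers g⟩), by simp [φ]⟩
  have hinj := (hsurj.bijective_of_nat_card_le (by simp [hcard, Nat.card_zpowers])).1
  rw [disjoint_def]
  intro g hgx hgy
  have := @hinj (⟨g, hgx⟩, ⟨g⁻¹, inv_mem hgy⟩) 1 (by simp [φ])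
  simpa using congrArg (fun q => (q.1 : G)) this

theorem pow_mem_range_powMonoidHom {G : Type*} [CommGroup G] (g : G) {p k : ℕ} (h : p ∣ k) :
    g ^ k ∈ (powMonoidHom p : G →* G).range := by
  obtain ⟨j, rfl⟩ := h
  exact ⟨g ^ j, by rw [powMonoidHom_apply, ← pow_mul, mul_comm]⟩

theorem dvd_of_zpow_mul_zpow_mem_range_powMonoidHom {G : Type*} [CommGroup G] {x y : G}
    (hgen : closure {x, y} = ⊤) (hxy : Disjoint (zpowers x) (zpowers y)) {p : ℕ}
    (hpx : p ∣ orderOf x) {a b : ℤ}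
    (hab : x ^ a * y ^ b ∈ (powMonoidHom p : G →* G).range) :
    (p : ℤ) ∣ a := by
  obtain ⟨g, hg⟩ := hab
  obtain ⟨c, d, rfl⟩ := mem_closure_pair.mp (hgen ▸ mem_top g)
  have hprod : x ^ (a - p * c) * y ^ (b - p * d) = 1 := by
    rw [powMonoidHom_apply, ← zpow_natCast, mul_zpow, ← zpow_mul, ← zpow_mul] at hg
    rw [zpow_sub, zpow_sub, mul_comm (p : ℤ) c, mul_comm (p : ℤ) d, mul_mul_mul_comm,
      ← mul_inv, hg, mul_inv_cancel]
  have hx1 : x ^ (a - p * c) = 1 := disjoint_def.mp hxy (zpow_mem_zpowers x _)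
    (by rw [eq_inv_of_mul_eq_one_left hprod]; exact inv_mem (zpow_mem_zpowers y _))
  have := (Int.natCast_dvd_natCast.mpr hpx).trans (orderOf_dvd_iff_zpow_eq_one.mpr hx1)
  simpa using this.add (dvd_mul_right (p : ℤ) c)

theorem ncard_range_mul_zpow {G : Type*} [Group G] (a c : G) :
    (Set.range fun i : ℤ => a * c ^ i).ncard = orderOf c := by
  rw [Set.range_comp' (a * ·) (c ^ ·), ← coe_zpowers,
    Set.ncard_image_of_injective _ (mul_right_injective a), ← Nat.card_coe_set_eq]
  exact Nat.card_zpowers (a := c)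

theorem disjoint_range_mul_zpow {G : Type*} [Group G] {H : Subgroup G} {a b c d : G}
    (hc : c ∈ H) (hd : d ∈ H) (hab : a⁻¹ * b ∉ H) :
    Disjoint (Set.range fun i : ℤ => a * c ^ i) (Set.range fun j : ℤ => b * d ^ j) := by
  rw [Set.disjoint_left]
  rintro _ ⟨i, rfl⟩ ⟨j, hj⟩
  dsimp only at hj
  apply hab
  rw [show a⁻¹ * b = c ^ i * (d ^ j)⁻¹ by rw [eq_mul_inv_iff_mul_eq, mul_assoc, hj]; group]
  exact mul_mem (zpow_mem hc i) (inv_mem (zpow_mem hd j))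

theorem ncard_union_range_mul_zpow {G : Type*} [CommGroup G] [Finite G] {x y : G} {p : ℕ}
    (hp : p ≠ 1) (hgen : closure {x, y} = ⊤) (hxy : Disjoint (zpowers x) (zpowers y))
    (hpx : p ∣ orderOf x) (hpy : p ∣ orderOf y) {x₀ y₀ : G}
    (hx₀ : x₀ ∈ (powMonoidHom p : G →* G).range)
    (hy₀ : y₀ ∈ (powMonoidHom p : G →* G).range)
    (hx₀p : orderOf x₀ = p) (hy₀p : orderOf y₀ = p)
    (hz₀p : orderOf (y₀ * x₀⁻¹) = p) :
    ((Set.range fun i : ℤ => x * y₀ ^ i) ∪ (Set.range fun i : ℤ => y * x₀ ^ i) ∪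
      (Set.range fun i : ℤ => x * y⁻¹ * (y₀ * x₀⁻¹) ^ i)).ncard = 3 * p := by
  set P := (powMonoidHom p : G →* G).range
  have hnd : ¬ (p : ℤ) ∣ 1 := by exact_mod_cast Nat.dvd_one.not.mpr hp
  have hz₀ := mul_mem hy₀ (inv_mem hx₀)
  have hxy' : x⁻¹ * y ∉ P := fun h => hnd <| dvd_neg.mp <|
    dvd_of_zpow_mul_zpow_mem_range_powMonoidHom hgen hxy hpx (a := -1) (b := 1)
      (by rwa [zpow_neg_one, zpow_one])
  have hxz : x⁻¹ * (x * y⁻¹) ∉ P := fun h => hnd <| dvd_neg.mp <|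
    dvd_of_zpow_mul_zpow_mem_range_powMonoidHom (Set.pair_comm x y ▸ hgen) hxy.symm hpy
      (a := -1) (b := 0)
      (by rwa [zpow_neg_one, zpow_zero, mul_one, ← inv_mul_cancel_left x y⁻¹])
  have hyz : y⁻¹ * (x * y⁻¹) ∉ P := fun h => hnd <|
    dvd_of_zpow_mul_zpow_mem_range_powMonoidHom hgen hxy hpx (a := 1) (b := -2) <| by
      convert h using 1
      simp only [zpow_one, zpow_neg, zpow_two, mul_inv]
      ac_rfl
  rw [Set.ncard_union_eq, Set.ncard_union_eq, ncard_range_mul_zpow, ncard_range_mul_zpow,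
    ncard_range_mul_zpow, hx₀p, hy₀p, hz₀p]
  · ring
  · exact disjoint_range_mul_zpow hy₀ hx₀ hxy'
  · exact Set.disjoint_union_left.mpr
      ⟨disjoint_range_mul_zpow hy₀ hz₀ hxz, disjoint_range_mul_zpow hx₀ hz₀ hyz⟩

theorem stmt_13_general {G : Type*} [CommGroup G] (p n m : ℕ) (hp : p.Prime)
    (hm : 2 ≤ m) (hnm : m ≤ n)
    (hcard : Nat.card G = p ^ (n + m))
    (x y : G) (hx : orderOf x = p ^ n) (hy : orderOf y = p ^ m)
    (hgen : Subgroup.closure {x, y} = ⊤)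
    (x₀ y₀ : G) (hx₀ : x₀ = x ^ p ^ (n - 1)) (hy₀ : y₀ = y ^ p ^ (m - 1))
    (α : G ≃* G) (hαx : α x = x * y₀) (hαy : α y = y * x₀) :
    α x₀ = x₀ ∧ α y₀ = y₀ ∧
    (∀ i : ℕ, (α ^ i) x = x * y₀ ^ i ∧ (α ^ i) y = y * x₀ ^ i) ∧
    orderOf α = p ∧
    {g : G | ∃ i : ℤ, g = (α ^ i) x ∨ g = (α ^ i) y ∨
      g = (α ^ i) (x * y⁻¹)}.ncard = 3 * p := by
  have : Fact p.Prime := ⟨hp⟩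
  have : Finite G := Nat.finite_of_card_ne_zero (by simp [hcard, hp.ne_zero])
  have hx₀p : orderOf x₀ = p := hx₀ ▸ orderOf_pow_prime_pow_pred hp (by omega) hx
  have hy₀p : orderOf y₀ = p := hy₀ ▸ orderOf_pow_prime_pow_pred hp (by omega) hy
  have hαx₀ : α x₀ = x₀ := by
    rw [hx₀]; exact α.apply_pow_eq_self hαx (by rw [hy₀p]; exact dvd_pow_self p (by omega))
  have hαy₀ : α y₀ = y₀ := by
    rw [hy₀]; exact α.apply_pow_eq_self hαy (by rw [hx₀p]; exact dvd_pow_self p (by omega))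
  have hxy := disjoint_zpowers_of_card_eq hgen (by rw [hcard, hx, hy, pow_add])
  refine ⟨hαx₀, hαy₀, fun i => ?_, ?_, ?_⟩
  · simpa using And.intro (α.zpow_apply_eq_mul_zpow hαy₀ hαx i)
      (α.zpow_apply_eq_mul_zpow hαx₀ hαy i)
  · exact α.orderOf_eq_of_apply_eq_mul hgen hαy₀ hαx₀ hαx hαy hy₀p
      (hx₀p ▸ pow_orderOf_eq_one x₀)
  · rw [α.setOf_zpow_apply_eq_union hαy₀ hαx₀ hαx hαy]
    exact ncard_union_range_mul_zpow hp.ne_one hgen hxy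
      (hx ▸ dvd_pow_self p (by omega)) (hy ▸ dvd_pow_self p (by omega))
      (hx₀ ▸ pow_mem_range_powMonoidHom x (dvd_pow_self p (by omega)))
      (hy₀ ▸ pow_mem_range_powMonoidHom y (dvd_pow_self p (by omega))) hx₀p hy₀p
      (orderOf_mul_inv_eq_prime hxy (hx₀ ▸ npow_mem_zpowers x _)
        (hy₀ ▸ npow_mem_zpowers y _) hx₀p hy₀p)

/-- For `G ≅ Z_{p^n} × Z_{p^m}` (`n ≥ m ≥ 2`) and the automorphism
`α : (x,y) ↦ (x·y₀, y·x₀)`, `α` fixes `x₀` and `y₀`, the stated power formulas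
hold, `α` has order `p`, and the connection set
`S = {x^{α^i}, y^{α^i}, (xy⁻¹)^{α^i} : i ∈ ℤ}` has cardinality `3p`. -/
theorem stmt_13 {G : Type*} [CommGroup G] [Fintype G] (p n m : ℕ) (hp : p.Prime)
    (hodd : Odd p) (hm : 2 ≤ m) (hnm : m ≤ n)
    (hcard : Nat.card G = p ^ (n + m))
    (x y : G) (hx : orderOf x = p ^ n) (hy : orderOf y = p ^ m)
    (hgen : Subgroup.closure {x, y} = ⊤)
    (x₀ y₀ : G) (hx₀ : x₀ = x ^ p ^ (n - 1)) (hy₀ : y₀ = y ^ p ^ (m - 1))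
    (α : G ≃* G) (hαx : α x = x * y₀) (hαy : α y = y * x₀) :
    α x₀ = x₀ ∧ α y₀ = y₀ ∧
    (∀ i : ℕ, (α ^ i) x = x * y₀ ^ i ∧ (α ^ i) y = y * x₀ ^ i) ∧
    orderOf α = p ∧
    {g : G | ∃ i : ℤ, g = (α ^ i) x ∨ g = (α ^ i) y ∨
      g = (α ^ i) (x * y⁻¹)}.ncard = 3 * p :=
  stmt_13_general p n m hp hm hnm hcard x y hx hy hgen x₀ y₀ hx₀ hy₀ α hαx hαy
end
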